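/- arXiv:2603.05245 — 7 statements merged into one kernel-verified Lean document; each statement's English description precedes it below -/
import Mathlib

section
/- Let n ≥ 1 be an integer, α ≥ 0, 0 < ε ≤ δ reals, and D₀ ∈ ℝ, and set C = 4δ(nδ + α)/(n²ε²). Let k ≥ 1 and let σ₁ ≤ σ₂ ≤ … ≤ σ_{k+1} be reals with σᵢ + D₀ > 0 for all i = 1,…,k+1, satisfying the Yang-type inequality Σ_{i=1}^k (σ_{k+1} − σᵢ)² ≤ C · Σ_{i=1}^k (σ_{k+1} − σᵢ)(σᵢ + D₀). Then σ_{k+1} + D₀ ≤ (1 + C/2) · (1/k)Σ_{i=1}^k (σᵢ + D₀) + √( ( (C/2) · (1/k)Σ_{i=1}^k (σᵢ + D₀) )² − (1 + C) · (1/k)Σ_{j=1}^k ( σⱼ − (1/k)Σ_{i=1}^k σᵢ )² ). -/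
open scoped BigOperators

/-- Corollary 1 (first part): upper bound for `σ_{k+1}` from the Yang-type
quadratic inequality.  Eigenvalues are indexed `σ 1, …, σ (k+1)`. -/
theorem upper_bound_from_yang_inequality
    (n : ℕ) (hn : 1 ≤ n) (α ε δ D₀ : ℝ) (hα : 0 ≤ α) (hε : 0 < ε) (hεδ : ε ≤ δ)
    (C : ℝ) (hC : C = 4 * δ * (n * δ + α) / (n ^ 2 * ε ^ 2))
    (k : ℕ) (hk : 1 ≤ k) (σ : ℕ → ℝ)
    (hmono : ∀ i, 1 ≤ i → i ≤ k → σ i ≤ σ (i + 1))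
    (hpos : ∀ i, 1 ≤ i → i ≤ k + 1 → 0 < σ i + D₀)
    (hYang : ∑ i ∈ Finset.Icc 1 k, (σ (k + 1) - σ i) ^ 2 ≤
        C * ∑ i ∈ Finset.Icc 1 k, (σ (k + 1) - σ i) * (σ i + D₀)) :
    σ (k + 1) + D₀ ≤
      (1 + C / 2) * ((1 / (k : ℝ)) * ∑ i ∈ Finset.Icc 1 k, (σ i + D₀)) +
        Real.sqrt
          (((C / 2) * ((1 / (k : ℝ)) * ∑ i ∈ Finset.Icc 1 k, (σ i + D₀))) ^ 2 -
            (1 + C) * ((1 / (k : ℝ)) *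
              ∑ j ∈ Finset.Icc 1 k,
                (σ j - (1 / (k : ℝ)) * ∑ i ∈ Finset.Icc 1 k, σ i) ^ 2)) := by
  have hK : (0 : ℝ) < (k : ℝ) := by exact_mod_cast hk
  set Λ : ℝ := σ (k + 1) with hΛ
  set s1 : ℝ := ∑ i ∈ Finset.Icc 1 k, σ i with hs1
  set s2 : ℝ := ∑ i ∈ Finset.Icc 1 k, σ i ^ 2 with hs2
  have hcard : (Finset.Icc 1 k).card = k := by
    rw [Nat.card_Icc]; omega
  have hsumD : ∑ i ∈ Finset.Icc 1 k, (σ i + D₀) = s1 + (k : ℝ) * D₀ := by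
    rw [Finset.sum_add_distrib, Finset.sum_const, hcard]
    simp [nsmul_eq_mul, hs1]
  have h1 : ∑ i ∈ Finset.Icc 1 k, (Λ - σ i) ^ 2
      = (k : ℝ) * Λ ^ 2 - 2 * Λ * s1 + s2 := by
    have : ∀ i ∈ Finset.Icc 1 k, (Λ - σ i) ^ 2 = Λ ^ 2 - 2 * Λ * σ i + σ i ^ 2 :=
      fun i _ => by ring
    rw [Finset.sum_congr rfl this, Finset.sum_add_distrib, Finset.sum_sub_distrib,
      Finset.sum_const, hcard, ← Finset.mul_sum]
    simp [nsmul_eq_mul, hs1, hs2]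
  have h2 : ∑ i ∈ Finset.Icc 1 k, (Λ - σ i) * (σ i + D₀)
      = Λ * s1 + (k : ℝ) * Λ * D₀ - s2 - D₀ * s1 := by
    have : ∀ i ∈ Finset.Icc 1 k, (Λ - σ i) * (σ i + D₀)
        = (Λ * σ i + Λ * D₀) - (σ i ^ 2 + D₀ * σ i) := fun i _ => by ring
    rw [Finset.sum_congr rfl this, Finset.sum_sub_distrib, Finset.sum_add_distrib,
      Finset.sum_add_distrib, Finset.sum_const, hcard, ← Finset.mul_sum, ← Finset.mul_sum]
    simp [nsmul_eq_mul, hs1, hs2]; ring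
  have h3 : ∑ j ∈ Finset.Icc 1 k, (σ j - (1 / (k : ℝ)) * s1) ^ 2
      = s2 - 2 * (1 / (k : ℝ)) * s1 * s1 + (k : ℝ) * ((1 / (k : ℝ)) * s1) ^ 2 := by
    have : ∀ j ∈ Finset.Icc 1 k, (σ j - (1 / (k : ℝ)) * s1) ^ 2
        = σ j ^ 2 - (2 * (1 / (k : ℝ)) * s1) * σ j + ((1 / (k : ℝ)) * s1) ^ 2 :=
      fun j _ => by ring
    rw [Finset.sum_congr rfl this, Finset.sum_add_distrib, Finset.sum_sub_distrib,
      Finset.sum_const, hcard, ← Finset.mul_sum]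
    simp [nsmul_eq_mul, hs1, hs2]
  rw [h1, h2] at hYang
  rw [hsumD, h3]
  have hk0 : (k : ℝ) ≠ 0 := hK.ne'
  have key : (Λ + D₀ - (1 + C / 2) * (1 / (k : ℝ) * (s1 + (k : ℝ) * D₀))) ^ 2 ≤
      (C / 2 * (1 / (k : ℝ) * (s1 + (k : ℝ) * D₀))) ^ 2 -
        (1 + C) * (1 / (k : ℝ) *
          (s2 - 2 * (1 / (k : ℝ)) * s1 * s1 + (k : ℝ) * (1 / (k : ℝ) * s1) ^ 2)) := by
    have hid : (Λ + D₀ - (1 + C / 2) * (1 / (k : ℝ) * (s1 + (k : ℝ) * D₀))) ^ 2 -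
        ((C / 2 * (1 / (k : ℝ) * (s1 + (k : ℝ) * D₀))) ^ 2 -
          (1 + C) * (1 / (k : ℝ) *
            (s2 - 2 * (1 / (k : ℝ)) * s1 * s1 + (k : ℝ) * (1 / (k : ℝ) * s1) ^ 2)))
        = (((k : ℝ) * Λ ^ 2 - 2 * Λ * s1 + s2)
            - C * (Λ * s1 + (k : ℝ) * Λ * D₀ - s2 - D₀ * s1)) / (k : ℝ) := by
      field_simp
      ring
    have hnum : ((k : ℝ) * Λ ^ 2 - 2 * Λ * s1 + s2)
        - C * (Λ * s1 + (k : ℝ) * Λ * D₀ - s2 - D₀ * s1) ≤ 0 := by linarith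
    have := div_nonpos_of_nonpos_of_nonneg hnum hK.le
    linarith
  have h4 : Λ + D₀ - (1 + C / 2) * (1 / (k : ℝ) * (s1 + (k : ℝ) * D₀)) ≤
      Real.sqrt ((C / 2 * (1 / (k : ℝ) * (s1 + (k : ℝ) * D₀))) ^ 2 -
        (1 + C) * (1 / (k : ℝ) *
          (s2 - 2 * (1 / (k : ℝ)) * s1 * s1 + (k : ℝ) * (1 / (k : ℝ) * s1) ^ 2))) := by
    calc Λ + D₀ - (1 + C / 2) * (1 / (k : ℝ) * (s1 + (k : ℝ) * D₀))
        ≤ |Λ + D₀ - (1 + C / 2) * (1 / (k : ℝ) * (s1 + (k : ℝ) * D₀))| := le_abs_self _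
      _ = Real.sqrt ((Λ + D₀ - (1 + C / 2) * (1 / (k : ℝ) * (s1 + (k : ℝ) * D₀))) ^ 2) :=
          (Real.sqrt_sq_eq_abs _).symm
      _ ≤ _ := Real.sqrt_le_sqrt key
  linarith
end

section
/- Let n ≥ 1 be an integer, α ≥ 0, 0 < ε ≤ δ reals, and D₀ ∈ ℝ, and set C = 4δ(nδ + α)/(n²ε²). Let (σ_i)_{i≥1} be a nondecreasing sequence of reals with σᵢ + D₀ > 0 for all i, satisfying for every positive integer k the Yang-type inequality Σ_{i=1}^k (σ_{k+1} − σᵢ)² ≤ C · Σ_{i=1}^k (σ_{k+1} − σᵢ)(σᵢ + D₀). Then for every positive integer k, σ_{k+1} + D₀ ≤ (1 + C) · k^{C/2} · (σ₁ + D₀). -/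
open scoped BigOperators

private lemma cy_nonneg_cert (a c : ℝ) (ha : 0 ≤ a) (hc : 0 ≤ c) :
    0 ≤ (162 : ℝ) * a ^ 0 * c ^ 3 + (324 : ℝ) * a ^ 0 * c ^ 4 + (204 : ℝ) * a ^ 0 * c ^ 5 + (56 : ℝ) * a ^ 0 * c ^ 6 + (128/9 : ℝ) * a ^ 0 * c ^ 7 + (594 : ℝ) * a ^ 1 * c ^ 3 + (1116 : ℝ) * a ^ 1 * c ^ 4 + (620 : ℝ) * a ^ 1 * c ^ 5 + (376/3 : ℝ) * a ^ 1 * c ^ 6 + (256/9 : ℝ) * a ^ 1 * c ^ 7 + (1809/2 : ℝ) * a ^ 2 * c ^ 3 + (1593 : ℝ) * a ^ 2 * c ^ 4 + (2321/3 : ℝ) * a ^ 2 * c ^ 5 + (314/3 : ℝ) * a ^ 2 * c ^ 6 + (64/3 : ℝ) * a ^ 2 * c ^ 7 + (732 : ℝ) * a ^ 3 * c ^ 3 + (1206 : ℝ) * a ^ 3 * c ^ 4 + (1520/3 : ℝ) * a ^ 3 * c ^ 5 + (116/3 : ℝ) * a ^ 3 * c ^ 6 + (64/9 : ℝ) * a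 ^ 3 * c ^ 7 + (332 : ℝ) * a ^ 4 * c ^ 3 + (1532/3 : ℝ) * a ^ 4 * c ^ 4 + (550/3 : ℝ) * a ^ 4 * c ^ 5 + (16/3 : ℝ) * a ^ 4 * c ^ 6 + (8/9 : ℝ) * a ^ 4 * c ^ 7 + (80 : ℝ) * a ^ 5 * c ^ 3 + (344/3 : ℝ) * a ^ 5 * c ^ 4 + (104/3 : ℝ) * a ^ 5 * c ^ 5 + (8 : ℝ) * a ^ 6 * c ^ 3 + (32/3 : ℝ) * a ^ 6 * c ^ 4 + (8/3 : ℝ) * a ^ 6 * c ^ 5 := by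
  have h : ∀ (q : ℝ) (i j : ℕ), 0 ≤ q → 0 ≤ q * a ^ i * c ^ j := fun q i j hq =>
    mul_nonneg (mul_nonneg hq (pow_nonneg ha i)) (pow_nonneg hc j)
  repeat' apply add_nonneg
  all_goals exact h _ _ _ (by norm_num)

private lemma cy_A_cert (a c : ℝ) (ha : 0 ≤ a) (hc : 0 ≤ c) :
    0 < (81 : ℝ) * a ^ 0 * c ^ 0 + (171/2 : ℝ) * a ^ 0 * c ^ 1 + (21/2 : ℝ) * a ^ 0 * c ^ 2 + (16/3 : ℝ) * a ^ 0 * c ^ 3 + (216 : ℝ) * a ^ 1 * c ^ 0 + (222 : ℝ) * a ^ 1 * c ^ 1 + (13 : ℝ) * a ^ 1 * c ^ 2 + (16/3 : ℝ) * a ^ 1 * c ^ 3 + (216 : ℝ) * a ^ 2 * c ^ 0 + (218 : ℝ) * a ^ 2 * c ^ 1 + (4 : ℝ) * a ^ 2 * c ^ 2 + (4/3 : ℝ) * a ^ 2 * c ^ 3 + (96 : ℝ) * a ^ 3 * c ^ 0 + (96 : ℝ) * a ^ 3 * c ^ 1 + (16 : ℝ) * a ^ 4 * c ^ 0 + (16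 : ℝ) * a ^ 4 * c ^ 1 := by
  have h : ∀ (q : ℝ) (i j : ℕ), 0 ≤ q → 0 ≤ q * a ^ i * c ^ j := fun q i j hq =>
    mul_nonneg (mul_nonneg hq (pow_nonneg ha i)) (pow_nonneg hc j)
  have h81 : (0:ℝ) < (81 : ℝ) * a ^ 0 * c ^ 0 := by norm_num
  repeat' first
    | exact h81
    | apply add_pos_of_pos_of_nonneg
    | exact h _ _ _ (by norm_num)

private lemma cy_P_cert (a c : ℝ) (ha : 0 ≤ a) (hc : 0 ≤ c) :
    0 ≤ (54 : ℝ) * a ^ 0 * c ^ 0 + (72 : ℝ) * a ^ 0 * c ^ 1 + (24 : ℝ) * a ^ 0 * c ^ 2 + (16/3 : ℝ) * a ^ 0 * c ^ 3 + (135 : ℝ) * a ^ 1 * c ^ 0 + (168 : ℝ) * a ^ 1 * c ^ 1 + (40 : ℝ) * a ^ 1 * c ^ 2 + (16/3 : ℝ) * a ^ 1 * c ^ 3 + (126 : ℝ) * a ^ 2 * c ^ 0 + (146 : ℝ) * a ^ 2 * c ^ 1 + (22 : ℝ) * a ^ 2 * c ^ 2 + (4/3 : ℝ) * a ^ 2 *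 c ^ 3 + (52 : ℝ) * a ^ 3 * c ^ 0 + (56 : ℝ) * a ^ 3 * c ^ 1 + (4 : ℝ) * a ^ 3 * c ^ 2 + (8 : ℝ) * a ^ 4 * c ^ 0 + (8 : ℝ) * a ^ 4 * c ^ 1 := by
  have h : ∀ (q : ℝ) (i j : ℕ), 0 ≤ q → 0 ≤ q * a ^ i * c ^ j := fun q i j hq =>
    mul_nonneg (mul_nonneg hq (pow_nonneg ha i)) (pow_nonneg hc j)
  repeat' apply add_nonneg
  all_goals exact h _ _ _ (by norm_num)

set_option maxHeartbeats 1000000 in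
private lemma cy_psd_A (c k : ℝ) (hk : 1 ≤ k) (hc : 0 ≤ c) :
    0 < ((k+1)^2*((2*k+1)^3 + 2*c*(2*k+1)^2 + 2*c^2*(2*k+1) + (4/3)*c^3) - k*(k+1)*(2*k+1)^3) + (k+1-(1+c/2))*((1+c)*(2*k+1)^3) := by
  have e : ((k+1)^2*((2*k+1)^3 + 2*c*(2*k+1)^2 + 2*c^2*(2*k+1) + (4/3)*c^3) - k*(k+1)*(2*k+1)^3) + (k+1-(1+c/2))*((1+c)*(2*k+1)^3) = (81 : ℝ) * (k-1) ^ 0 * c ^ 0 + (171/2 : ℝ) * (k-1) ^ 0 * c ^ 1 + (21/2 : ℝ) * (k-1) ^ 0 * c ^ 2 + (16/3 : ℝ) * (k-1) ^ 0 * c ^ 3 + (216 : ℝ) * (k-1) ^ 1 * c ^ 0 + (222 : ℝ) * (k-1) ^ 1 * c ^ 1 + (13 : ℝ) * (k-1) ^ 1 * c ^ 2 + (16/3 : ℝ) * (k-1) ^ 1 * c ^ 3 + (216 : ℝ) * (k-1) ^ 2 * c ^ 0 + (218 : ℝ) * (k-1) ^ 2 * c ^ 1 + (4 : ℝ) * (k-1)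 ^ 2 * c ^ 2 + (4/3 : ℝ) * (k-1) ^ 2 * c ^ 3 + (96 : ℝ) * (k-1) ^ 3 * c ^ 0 + (96 : ℝ) * (k-1) ^ 3 * c ^ 1 + (16 : ℝ) * (k-1) ^ 4 * c ^ 0 + (16 : ℝ) * (k-1) ^ 4 * c ^ 1 := by ring
  have h := cy_A_cert (k-1) c (by linarith) hc
  linarith

set_option maxHeartbeats 1000000 in
private lemma cy_psd_G (c k : ℝ) (hk : 1 ≤ k) (hc : 0 ≤ c) :
    (1+c/2) * (((k+1)^2*((2*k+1)^3 + 2*c*(2*k+1)^2 + 2*c^2*(2*k+1) + (4/3)*c^3) - k*(k+1)*(2*k+1)^3) + k*((1+c)*(2*k+1)^3))^2 ≤ (((k+1)^2*((2*k+1)^3 + 2*c*(2*k+1)^2 + 2*c^2*(2*k+1) + (4/3)*c^3) - k*(k+1)*(2*k+1)^3) + (k+1-(1+c/2))*((1+c)*(2*k+1)^3)) * ((1+c)*((k+1)^2*((2*k+1)^3 + 2*c*(2*k+1)^2 + 2*c^2*(2*k+1) + (4/3)*c^3) - k*(k+1)*(2*k+1)^3) + k*((1+c)*(2*k+1)^3))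 := by
  have e : (((k+1)^2*((2*k+1)^3 + 2*c*(2*k+1)^2 + 2*c^2*(2*k+1) + (4/3)*c^3) - k*(k+1)*(2*k+1)^3) + (k+1-(1+c/2))*((1+c)*(2*k+1)^3)) * ((1+c)*((k+1)^2*((2*k+1)^3 + 2*c*(2*k+1)^2 + 2*c^2*(2*k+1) + (4/3)*c^3) - k*(k+1)*(2*k+1)^3) + k*((1+c)*(2*k+1)^3)) - (1+c/2) * (((k+1)^2*((2*k+1)^3 + 2*c*(2*k+1)^2 + 2*c^2*(2*k+1) + (4/3)*c^3) - k*(k+1)*(2*k+1)^3) + k*((1+c)*(2*k+1)^3))^2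
      = (162 : ℝ) * (k-1) ^ 0 * c ^ 3 + (324 : ℝ) * (k-1) ^ 0 * c ^ 4 + (204 : ℝ) * (k-1) ^ 0 * c ^ 5 + (56 : ℝ) * (k-1) ^ 0 * c ^ 6 + (128/9 : ℝ) * (k-1) ^ 0 * c ^ 7 + (594 : ℝ) * (k-1) ^ 1 * c ^ 3 + (1116 : ℝ) * (k-1) ^ 1 * c ^ 4 + (620 : ℝ) * (k-1) ^ 1 * c ^ 5 + (376/3 : ℝ) * (k-1) ^ 1 * c ^ 6 + (256/9 : ℝ) * (k-1) ^ 1 * c ^ 7 + (1809/2 : ℝ) * (k-1) ^ 2 * c ^ 3 + (1593 : ℝ) * (k-1) ^ 2 * c ^ 4 + (2321/3 : ℝ) * (k-1) ^ 2 * c ^ 5 + (314/3 : ℝ) * (k-1) ^ 2 * c ^ 6 + (64/3 : ℝ) * (k-1) ^ 2 * c ^ 7 + (732 : ℝ) * (k-1) ^ 3 * c ^ 3 + (1206 : ℝ) * (k-1) ^ 3 * c ^ 4 + (1520/3 : ℝ) * (k-1) ^ 3 * c ^ 5 + (116/3 : ℝ) * (k-1) ^ 3 * c ^ 6 + (64/9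 : ℝ) * (k-1) ^ 3 * c ^ 7 + (332 : ℝ) * (k-1) ^ 4 * c ^ 3 + (1532/3 : ℝ) * (k-1) ^ 4 * c ^ 4 + (550/3 : ℝ) * (k-1) ^ 4 * c ^ 5 + (16/3 : ℝ) * (k-1) ^ 4 * c ^ 6 + (8/9 : ℝ) * (k-1) ^ 4 * c ^ 7 + (80 : ℝ) * (k-1) ^ 5 * c ^ 3 + (344/3 : ℝ) * (k-1) ^ 5 * c ^ 4 + (104/3 : ℝ) * (k-1) ^ 5 * c ^ 5 + (8 : ℝ) * (k-1) ^ 6 * c ^ 3 + (32/3 : ℝ) * (k-1) ^ 6 * c ^ 4 + (8/3 : ℝ) * (k-1) ^ 6 * c ^ 5 := by ring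
  have h := cy_nonneg_cert (k-1) c (by linarith) hc
  linarith

set_option maxHeartbeats 1000000 in
private lemma cy_psd_P (c k : ℝ) (hk : 1 ≤ k) (hc : 0 ≤ c) :
    0 ≤ ((k+1)^2*((2*k+1)^3 + 2*c*(2*k+1)^2 + 2*c^2*(2*k+1) + (4/3)*c^3) - k*(k+1)*(2*k+1)^3) := by
  have e : ((k+1)^2*((2*k+1)^3 + 2*c*(2*k+1)^2 + 2*c^2*(2*k+1) + (4/3)*c^3) - k*(k+1)*(2*k+1)^3) = (54 : ℝ) * (k-1) ^ 0 * c ^ 0 + (72 : ℝ) * (k-1) ^ 0 * c ^ 1 + (24 : ℝ) * (k-1) ^ 0 * c ^ 2 + (16/3 : ℝ) * (k-1) ^ 0 * c ^ 3 + (135 : ℝ) * (k-1) ^ 1 * c ^ 0 + (168 : ℝ) * (k-1) ^ 1 * c ^ 1 + (40 : ℝ) * (k-1) ^ 1 * c ^ 2 + (16/3 : ℝ) * (k-1) ^ 1 * c ^ 3 + (126 : ℝ) * (k-1) ^ 2 * c ^ 0 + (146 : ℝ) * (k-1) ^ 2 * c ^ 1 + (22 : ℝ) * (k-1) ^ 2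 * c ^ 2 + (4/3 : ℝ) * (k-1) ^ 2 * c ^ 3 + (52 : ℝ) * (k-1) ^ 3 * c ^ 0 + (56 : ℝ) * (k-1) ^ 3 * c ^ 1 + (4 : ℝ) * (k-1) ^ 3 * c ^ 2 + (8 : ℝ) * (k-1) ^ 4 * c ^ 0 + (8 : ℝ) * (k-1) ^ 4 * c ^ 1 := by ring
  have h := cy_P_cert (k-1) c (by linarith) hc
  linarith

private lemma cy_pointwise (c k m T p w : ℝ) (hc : 0 ≤ c)
    (hA : 0 < p + (k+1-(1+c/2))*w)
    (hG : (1+c/2) * (p + k*w)^2 ≤ (p + (k+1-(1+c/2))*w) * ((1+c)*p + k*w)) :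
    w * (2*(1+c/2)*k*T*m - (1+c/2)*k*T^2 - (k+1-(1+c/2))*m^2)
      ≤ p * (m^2 - (2+c)*T*m + (1+c/2)*(1+c)*T^2) := by
  have hid : (p + (k+1-(1+c/2))*w) *
      (p * (m^2 - (2+c)*T*m + (1+c/2)*(1+c)*T^2)
        - w * (2*(1+c/2)*k*T*m - (1+c/2)*k*T^2 - (k+1-(1+c/2))*m^2))
      = ((p + (k+1-(1+c/2))*w) * m - (1+c/2) * (p + k*w) * T)^2
        + ((1+c/2) * ((p + (k+1-(1+c/2))*w) * ((1+c)*p + k*w) - (1+c/2) * (p + k*w)^2)) * T^2 := by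
    ring
  have h2 : 0 ≤ ((1+c/2) * ((p + (k+1-(1+c/2))*w) * ((1+c)*p + k*w) - (1+c/2) * (p + k*w)^2)) * T^2 := by
    have hc2 : (0:ℝ) ≤ 1 + c/2 := by linarith
    exact mul_nonneg (mul_nonneg hc2 (by linarith)) (sq_nonneg T)
  have h1 : 0 ≤ (p + (k+1-(1+c/2))*w) *
      (p * (m^2 - (2+c)*T*m + (1+c/2)*(1+c)*T^2)
        - w * (2*(1+c/2)*k*T*m - (1+c/2)*k*T^2 - (k+1-(1+c/2))*m^2)) := by
    rw [hid]; exact add_nonneg (sq_nonneg _) h2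
  nlinarith [h1, hA]

private lemma cy_log_bound (k : ℝ) (hk : 1 ≤ k) : 2/(2*k+1) ≤ Real.log ((k+1)/k) := by
  have hk0 : (0:ℝ) < k := by linarith
  have hD : (0:ℝ) < 2*k+1 := by linarith
  have hy : (0:ℝ) < (k+1)/k := by positivity
  rw [Real.le_log_iff_exp_le hy]
  have hs0 : (0:ℝ) ≤ 2/(2*k+1) := by positivity
  have hs1 : 2/(2*k+1) ≤ 1 := by rw [div_le_one hD]; linarith
  have h := Real.exp_bound' hs0 hs1 (n := 3) (by norm_num)
  have hsum : ∑ m ∈ Finset.range 3, (2/(2*k+1)) ^ m / (Nat.factorial m) =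
      1 + 2/(2*k+1) + (2/(2*k+1))^2/2 := by
    norm_num [Finset.sum_range_succ, Nat.factorial]
    try ring
  rw [hsum] at h
  have e : (k+1)/k - (1 + 2/(2*k+1) + (2/(2*k+1))^2/2 +
      (2/(2*k+1))^3 * ((3:ℕ)+1) / ((Nat.factorial 3) * (3:ℕ))) = (1 + 2*k/9)/(k*(2*k+1)^3) := by
    have h6 : ((Nat.factorial 3 : ℕ) : ℝ) = 6 := by norm_num [Nat.factorial]
    push_cast
    rw [show ((Nat.factorial 3 : ℕ) : ℝ) = 6 from h6]
    field_simp
    ring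
  have hpos : (0:ℝ) ≤ (1 + 2*k/9)/(k*(2*k+1)^3) := by positivity
  push_cast at h e ⊢
  linarith

private lemma cy_E_bound (k c : ℝ) (hk : 1 ≤ k) (hc : 0 < c) :
    1 + 2*c/(2*k+1) + 2*c^2/(2*k+1)^2 + (4/3)*c^3/(2*k+1)^3 ≤ ((k+1)/k) ^ c := by
  have hk0 : (0:ℝ) < k := by linarith
  have hD : (0:ℝ) < 2*k+1 := by linarith
  have hy : (0:ℝ) < (k+1)/k := by positivity
  set x := 2*c/(2*k+1) with hxdef
  have hx0 : (0:ℝ) ≤ x := by positivity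
  have h1 : 1 + x + x^2/2 + x^3/6 ≤ Real.exp x := by
    have h := Real.sum_le_exp_of_nonneg hx0 4
    have hsum : ∑ i ∈ Finset.range 4, x ^ i / (Nat.factorial i) =
        1 + x + x^2/2 + x^3/6 := by
      norm_num [Finset.sum_range_succ, Nat.factorial]
      try ring
    linarith [hsum ▸ h]
  have h2 : x ≤ Real.log ((k+1)/k) * c := by
    have hl := cy_log_bound k hk
    have h3 := mul_le_mul_of_nonneg_right hl hc.le
    calc x = 2/(2*k+1) * c := by rw [hxdef]; ring
      _ ≤ Real.log ((k+1)/k) * c := h3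
  have h3 : Real.exp x ≤ ((k+1)/k) ^ c := by
    rw [Real.rpow_def_of_pos hy]
    exact Real.exp_le_exp.mpr h2
  have hE : 1 + 2*c/(2*k+1) + 2*c^2/(2*k+1)^2 + (4/3)*c^3/(2*k+1)^3
      = 1 + x + x^2/2 + x^3/6 := by
    rw [hxdef]; field_simp; ring
  linarith

set_option maxHeartbeats 2000000 in
private lemma cy_step (c k T S m : ℝ) (hk : 1 ≤ k) (hc : 0 < c)
    (hstar : m^2 - (2+c)*T*m + (1+c)*S ≤ 0) :
    (1+c/2)*((k*T+m)/(k+1))^2 - (k*S+m^2)/(k+1) ≤ ((k+1)/k) ^ c * ((1+c/2)*T^2 - S) := by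
  have hk0 : (0:ℝ) < k := by linarith
  have hk1 : (0:ℝ) < k + 1 := by linarith
  have hc1 : (0:ℝ) < 1 + c := by linarith
  have hD : (0:ℝ) < 2*k+1 := by linarith
  have hQ0 : 0 ≤ m^2 - (2+c)*T*m + (1+c/2)*(1+c)*T^2 := by
    nlinarith [sq_nonneg (m - (1+c/2)*T), mul_nonneg hc.le (sq_nonneg T),
      mul_nonneg (mul_nonneg hc.le hc.le) (sq_nonneg T)]
  have hQF : m^2 - (2+c)*T*m + (1+c/2)*(1+c)*T^2 ≤ (1+c)*((1+c/2)*T^2 - S) := by nlinarith [hstar]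
  have hF0 : 0 ≤ (1+c/2)*T^2 - S := by nlinarith [le_trans hQ0 hQF, hc1]
  have hNQ := cy_pointwise c k m T ((k+1)^2*((2*k+1)^3 + 2*c*(2*k+1)^2 + 2*c^2*(2*k+1) + (4/3)*c^3) - k*(k+1)*(2*k+1)^3) ((1+c)*(2*k+1)^3) hc.le (cy_psd_A c k hk hc.le) (cy_psd_G c k hk hc.le)
  have hP := cy_psd_P c k hk hc.le
  have hEb := cy_E_bound k c hk hc
  set R := ((k+1)/k) ^ c with hRdef
  have hR0 : (0:ℝ) ≤ R := Real.rpow_nonneg (by positivity) c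
  have key1 : ((1+c)*(2*k+1)^3) * ((k+1)^2 * ((1+c/2)*((k*T+m)/(k+1))^2 - (k*S+m^2)/(k+1)))
      = ((1+c)*(2*k+1)^3) * (k*(k+1)*((1+c/2)*T^2 - S))
        + ((1+c)*(2*k+1)^3) * (2*(1+c/2)*k*T*m - (1+c/2)*k*T^2 - (k+1-(1+c/2))*m^2) := by
    field_simp
    ring
  have key2 : ((1+c)*(2*k+1)^3) * (k*(k+1)*((1+c/2)*T^2 - S)) + ((k+1)^2*((2*k+1)^3 + 2*c*(2*k+1)^2 + 2*c^2*(2*k+1) + (4/3)*c^3) - k*(k+1)*(2*k+1)^3) * ((1+c)*((1+c/2)*T^2 - S))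
      = (k+1)^2 * ((1+c)*(2*k+1)^3) * ((1 + 2*c/(2*k+1) + 2*c^2/(2*k+1)^2 + (4/3)*c^3/(2*k+1)^3) * ((1+c/2)*T^2 - S)) := by
    field_simp
    ring
  have hPQ : ((k+1)^2*((2*k+1)^3 + 2*c*(2*k+1)^2 + 2*c^2*(2*k+1) + (4/3)*c^3) - k*(k+1)*(2*k+1)^3) * (m^2 - (2+c)*T*m + (1+c/2)*(1+c)*T^2) ≤ ((k+1)^2*((2*k+1)^3 + 2*c*(2*k+1)^2 + 2*c^2*(2*k+1) + (4/3)*c^3) - k*(k+1)*(2*k+1)^3) * ((1+c)*((1+c/2)*T^2 - S)) :=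
    mul_le_mul_of_nonneg_left hQF hP
  have hEF : (1 + 2*c/(2*k+1) + 2*c^2/(2*k+1)^2 + (4/3)*c^3/(2*k+1)^3) * ((1+c/2)*T^2 - S)
      ≤ R * ((1+c/2)*T^2 - S) := mul_le_mul_of_nonneg_right hEb hF0
  have hW0 : (0:ℝ) < ((1+c)*(2*k+1)^3) := by positivity
  have hchain : ((1+c)*(2*k+1)^3) * ((k+1)^2 * ((1+c/2)*((k*T+m)/(k+1))^2 - (k*S+m^2)/(k+1)))
      ≤ ((1+c)*(2*k+1)^3) * ((k+1)^2 * (R * ((1+c/2)*T^2 - S))) := by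
    rw [key1]
    calc ((1+c)*(2*k+1)^3) * (k*(k+1)*((1+c/2)*T^2 - S))
          + ((1+c)*(2*k+1)^3) * (2*(1+c/2)*k*T*m - (1+c/2)*k*T^2 - (k+1-(1+c/2))*m^2)
        ≤ ((1+c)*(2*k+1)^3) * (k*(k+1)*((1+c/2)*T^2 - S)) + ((k+1)^2*((2*k+1)^3 + 2*c*(2*k+1)^2 + 2*c^2*(2*k+1) + (4/3)*c^3) - k*(k+1)*(2*k+1)^3) * ((1+c)*((1+c/2)*T^2 - S)) := by
          linarith [le_trans hNQ hPQ]
      _ = (k+1)^2 * ((1+c)*(2*k+1)^3) * ((1 + 2*c/(2*k+1) + 2*c^2/(2*k+1)^2 + (4/3)*c^3/(2*k+1)^3) * ((1+c/2)*T^2 - S)) := key2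
      _ ≤ (k+1)^2 * ((1+c)*(2*k+1)^3) * (R * ((1+c/2)*T^2 - S)) :=
          mul_le_mul_of_nonneg_left hEF (by positivity)
      _ = ((1+c)*(2*k+1)^3) * ((k+1)^2 * (R * ((1+c/2)*T^2 - S))) := by ring
  have h4 := (mul_le_mul_iff_right₀ hW0).mp hchain
  exact (mul_le_mul_iff_right₀ (by positivity : (0:ℝ) < (k+1)^2)).mp h4
set_option maxHeartbeats 1600000 in
private lemma cy_invariant (c : ℝ) (hc : 0 < c) (μ : ℕ → ℝ)
    (hstar : ∀ j : ℕ, 1 ≤ j →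
      (μ (j+1))^2 - (2+c)*((∑ i ∈ Finset.Icc 1 j, μ i)/j)*(μ (j+1))
        + (1+c)*((∑ i ∈ Finset.Icc 1 j, (μ i)^2)/j) ≤ 0) :
    ∀ j : ℕ, 1 ≤ j →
      (1+c/2)*((∑ i ∈ Finset.Icc 1 j, μ i)/j)^2 - (∑ i ∈ Finset.Icc 1 j, (μ i)^2)/j
        ≤ (j:ℝ)^c * ((c/2)*(μ 1)^2) := by
  intro j hj
  induction j, hj using Nat.le_induction with
  | base =>
    simp only [Finset.Icc_self, Finset.sum_singleton, Nat.cast_one, Real.one_rpow]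
    ring_nf
    norm_num
  | succ j hj IH =>
    have hj0 : (0:ℝ) < (j:ℝ) := by exact_mod_cast Nat.lt_of_lt_of_le Nat.zero_lt_one hj
    have hj1 : (1:ℝ) ≤ (j:ℝ) := by exact_mod_cast hj
    have hstep := cy_step c (j:ℝ) ((∑ i ∈ Finset.Icc 1 j, μ i)/j)
      ((∑ i ∈ Finset.Icc 1 j, (μ i)^2)/j) (μ (j+1)) hj1 hc (hstar j hj)
    have eA : (∑ i ∈ Finset.Icc 1 (j+1), μ i) = (∑ i ∈ Finset.Icc 1 j, μ i) + μ (j+1) :=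
      Finset.sum_Icc_succ_top (by omega) _
    have eB : (∑ i ∈ Finset.Icc 1 (j+1), (μ i)^2) = (∑ i ∈ Finset.Icc 1 j, (μ i)^2) + (μ (j+1))^2 :=
      Finset.sum_Icc_succ_top (by omega) _
    have ecast : ((j+1 : ℕ) : ℝ) = (j:ℝ) + 1 := by push_cast; ring
    have eL : (1+c/2)*((∑ i ∈ Finset.Icc 1 (j+1), μ i)/((j+1:ℕ):ℝ))^2
        - (∑ i ∈ Finset.Icc 1 (j+1), (μ i)^2)/((j+1:ℕ):ℝ)
        = (1+c/2)*(((j:ℝ)*((∑ i ∈ Finset.Icc 1 j, μ i)/j) + μ (j+1))/((j:ℝ)+1))^2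
          - ((j:ℝ)*((∑ i ∈ Finset.Icc 1 j, (μ i)^2)/j) + (μ (j+1))^2)/((j:ℝ)+1) := by
      rw [eA, eB, ecast]
      have hjne : (j:ℝ) ≠ 0 := ne_of_gt hj0
      field_simp
    rw [eL]
    have hR0 : (0:ℝ) ≤ (((j:ℝ)+1)/(j:ℝ))^c := Real.rpow_nonneg (by positivity) c
    have hIH2 := mul_le_mul_of_nonneg_left IH hR0
    have emul : (((j:ℝ)+1)/(j:ℝ))^c * ((j:ℝ)^c * ((c/2)*(μ 1)^2))
        = ((j+1:ℕ):ℝ)^c * ((c/2)*(μ 1)^2) := by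
      rw [← mul_assoc, ← Real.mul_rpow (by positivity) (by positivity),
        div_mul_cancel₀ _ (ne_of_gt hj0), ecast]
    calc (1+c/2)*(((j:ℝ)*((∑ i ∈ Finset.Icc 1 j, μ i)/j) + μ (j+1))/((j:ℝ)+1))^2
          - ((j:ℝ)*((∑ i ∈ Finset.Icc 1 j, (μ i)^2)/j) + (μ (j+1))^2)/((j:ℝ)+1)
        ≤ (((j:ℝ)+1)/(j:ℝ))^c * ((1+c/2)*((∑ i ∈ Finset.Icc 1 j, μ i)/j)^2
            - (∑ i ∈ Finset.Icc 1 j, (μ i)^2)/j) := hstep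
      _ ≤ (((j:ℝ)+1)/(j:ℝ))^c * ((j:ℝ)^c * ((c/2)*(μ 1)^2)) := hIH2
      _ = ((j+1:ℕ):ℝ)^c * ((c/2)*(μ 1)^2) := emul

set_option maxHeartbeats 1600000 in
/-- Corollary 2 (Cheng–Yang recursion): from the Yang-type inequality for every
`k`, each eigenvalue satisfies `σ_{k+1} + D₀ ≤ (1 + C) k^(C/2) (σ₁ + D₀)`.
Eigenvalues are indexed `σ 1, σ 2, …`. -/
theorem cheng_yang_eigenvalue_growth_bound
    (n : ℕ) (hn : 1 ≤ n) (α ε δ D₀ : ℝ) (hα : 0 ≤ α) (hε : 0 < ε) (hεδ : ε ≤ δ)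
    (C : ℝ) (hC : C = 4 * δ * (n * δ + α) / (n ^ 2 * ε ^ 2))
    (σ : ℕ → ℝ)
    (hmono : ∀ i, 1 ≤ i → σ i ≤ σ (i + 1))
    (hpos : ∀ i, 1 ≤ i → 0 < σ i + D₀)
    (hYang : ∀ k : ℕ, 1 ≤ k →
      ∑ i ∈ Finset.Icc 1 k, (σ (k + 1) - σ i) ^ 2 ≤
        C * ∑ i ∈ Finset.Icc 1 k, (σ (k + 1) - σ i) * (σ i + D₀)) :
    ∀ k : ℕ, 1 ≤ k →
      σ (k + 1) + D₀ ≤ (1 + C) * (k : ℝ) ^ (C / 2) * (σ 1 + D₀) := by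
  have hδ : (0:ℝ) < δ := lt_of_lt_of_le hε hεδ
  have hn' : (1:ℝ) ≤ (n:ℝ) := by exact_mod_cast hn
  have hn0 : (0:ℝ) < (n:ℝ) := by linarith
  have hCpos : 0 < C := by
    rw [hC]
    apply div_pos
    · have hnd : (0:ℝ) < (n:ℝ)*δ + α := by nlinarith [mul_pos hn0 hδ]
      nlinarith [mul_pos hδ hnd]
    · positivity
  set μ : ℕ → ℝ := fun i => σ i + D₀ with hμdef
  have hstar : ∀ j : ℕ, 1 ≤ j →
      (μ (j+1))^2 - (2+C)*((∑ i ∈ Finset.Icc 1 j, μ i)/j)*(μ (j+1))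
        + (1+C)*((∑ i ∈ Finset.Icc 1 j, (μ i)^2)/j) ≤ 0 := by
    intro j hj
    have hj0 : (0:ℝ) < (j:ℝ) := by exact_mod_cast Nat.lt_of_lt_of_le Nat.zero_lt_one hj
    have hY := hYang j hj
    have eL : ∑ i ∈ Finset.Icc 1 j, (σ (j+1) - σ i)^2
        = (j:ℝ)*(μ (j+1))^2 - 2*(μ (j+1))*(∑ i ∈ Finset.Icc 1 j, μ i)
          + (∑ i ∈ Finset.Icc 1 j, (μ i)^2) := by
      rw [Finset.sum_congr rfl (fun i _ => show (σ (j+1) - σ i)^2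
        = (μ (j+1))^2 - 2*(μ (j+1))*(μ i) + (μ i)^2 by simp only [hμdef]; ring)]
      rw [Finset.sum_add_distrib, Finset.sum_sub_distrib, Finset.sum_const, ← Finset.mul_sum,
        Nat.card_Icc]
      simp only [Nat.add_sub_cancel, nsmul_eq_mul]
    have eR : ∑ i ∈ Finset.Icc 1 j, (σ (j+1) - σ i)*(σ i + D₀)
        = (μ (j+1))*(∑ i ∈ Finset.Icc 1 j, μ i) - (∑ i ∈ Finset.Icc 1 j, (μ i)^2) := by
      rw [Finset.sum_congr rfl (fun i _ => show (σ (j+1) - σ i)*(σ i + D₀)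
        = (μ (j+1))*(μ i) - (μ i)^2 by simp only [hμdef]; ring)]
      rw [Finset.sum_sub_distrib, ← Finset.mul_sum]
    rw [eL, eR] at hY
    have key : (j:ℝ) * ((μ (j+1))^2 - (2+C)*((∑ i ∈ Finset.Icc 1 j, μ i)/j)*(μ (j+1))
        + (1+C)*((∑ i ∈ Finset.Icc 1 j, (μ i)^2)/j))
        = (j:ℝ)*(μ (j+1))^2 - (2+C)*(∑ i ∈ Finset.Icc 1 j, μ i)*(μ (j+1))
          + (1+C)*(∑ i ∈ Finset.Icc 1 j, (μ i)^2) := by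
      field_simp
    have h2 : (j:ℝ) * ((μ (j+1))^2 - (2+C)*((∑ i ∈ Finset.Icc 1 j, μ i)/j)*(μ (j+1))
        + (1+C)*((∑ i ∈ Finset.Icc 1 j, (μ i)^2)/j)) ≤ 0 := by
      rw [key]; linarith
    have h2' : (j:ℝ) * ((μ (j+1))^2 - (2+C)*((∑ i ∈ Finset.Icc 1 j, μ i)/j)*(μ (j+1))
        + (1+C)*((∑ i ∈ Finset.Icc 1 j, (μ i)^2)/j)) ≤ (j:ℝ) * 0 := by rw [mul_zero]; exact h2
    exact le_of_mul_le_mul_left h2' hj0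
  have hinv := cy_invariant C hCpos μ hstar
  intro k hk
  have hk0 : (0:ℝ) < (k:ℝ) := by exact_mod_cast Nat.lt_of_lt_of_le Nat.zero_lt_one hk
  have hs := hstar k hk
  have hF := hinv k hk
  set T := (∑ i ∈ Finset.Icc 1 k, μ i)/(k:ℝ) with hTdef
  set S := (∑ i ∈ Finset.Icc 1 k, (μ i)^2)/(k:ℝ) with hSdef
  set m := μ (k+1) with hmdef
  have hmpos : 0 < m := by rw [hmdef, hμdef]; exact hpos (k+1) (by omega)
  have hμ1pos : 0 < μ 1 := by rw [hμdef]; exact hpos 1 le_rfl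
  clear_value T S m
  have h1 : (C/2)*m^2 ≤ (1+C)*(m^2 - (2+C)*T*m + (1+C/2)*(1+C)*T^2) := by
    nlinarith [mul_nonneg (show (0:ℝ) ≤ 1+C/2 by linarith) (sq_nonneg ((1+C)*T - m))]
  have h2 : m^2 - (2+C)*T*m + (1+C/2)*(1+C)*T^2 ≤ (1+C)*((1+C/2)*T^2 - S) := by
    have e : (1+C)*((1+C/2)*T^2 - S) - (m^2 - (2+C)*T*m + (1+C/2)*(1+C)*T^2)
        = -(m^2 - (2+C)*T*m + (1+C)*S) := by ring
    linarith [e, hs]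
  have h3 : (C/2)*m^2 ≤ (1+C)^2*((1+C/2)*T^2 - S) := by
    nlinarith [h1, mul_le_mul_of_nonneg_left h2 (show (0:ℝ) ≤ 1+C by linarith)]
  have h4 : (C/2)*m^2 ≤ (1+C)^2*((k:ℝ)^C*((C/2)*(μ 1)^2)) := by
    calc (C/2)*m^2 ≤ (1+C)^2*((1+C/2)*T^2 - S) := h3
      _ ≤ (1+C)^2*((k:ℝ)^C*((C/2)*(μ 1)^2)) :=
          mul_le_mul_of_nonneg_left hF (by positivity)
  have erw : ((k:ℝ)^(C/2))*((k:ℝ)^(C/2)) = (k:ℝ)^C := by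
    rw [← Real.rpow_add hk0]; norm_num
  have hm2 : m^2 ≤ ((1+C)*(k:ℝ)^(C/2)*(μ 1))^2 := by
    have e2 : (C/2)*(((1+C)*(k:ℝ)^(C/2)*(μ 1))^2)
        = (1+C)^2*((k:ℝ)^C*((C/2)*(μ 1)^2)) := by
      rw [← erw]; ring
    have h5 : (C/2)*m^2 ≤ (C/2)*(((1+C)*(k:ℝ)^(C/2)*(μ 1))^2) := by rw [e2]; exact h4
    exact le_of_mul_le_mul_left h5 (by linarith)
  have hRpos : 0 < (1+C)*(k:ℝ)^(C/2)*(μ 1) := by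
    have hkp : 0 < (k:ℝ)^(C/2) := Real.rpow_pos_of_pos hk0 _
    have h1C : (0:ℝ) < 1 + C := by linarith
    positivity
  have hfin : m ≤ (1+C)*(k:ℝ)^(C/2)*(μ 1) := by nlinarith [hm2, hmpos, hRpos]
  rw [hmdef, hμdef] at hfin
  simpa using hfin
end

section
/- Let n ≥ 1 be an integer, 0 < ε ≤ δ reals, c ≥ 0 a real, k ≥ 1, and let 0 < Γ₁ ≤ Γ₂ ≤ … ≤ Γ_{k+1} be reals. Assume that Σ_{i=1}^k (Γ_{k+1} − Γᵢ)² ≤ (1/(nε)) · √( Σ_{i=1}^k (Γ_{k+1} − Γᵢ)² [ (2n+4)δ√Γᵢ + c ] ) · √( Σ_{i=1}^k (Γ_{k+1} − Γᵢ) [ 4δ√Γᵢ + c ] ). Then Σ_{i=1}^k (Γ_{k+1} − Γᵢ)² ≤ (1/(n²ε²)) · Σ_{i=1}^k (Γ_{k+1} − Γᵢ) [ (2n+4)δ√Γᵢ + c ] [ 4δ√Γᵢ + c ]. -/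
open scoped BigOperators

/-- Pairwise rearrangement-type inequality used in the Chebyshev step. -/
lemma pair_ineq (wi wj ai aj bi bj : ℝ) (hwi : 0 ≤ wi) (hwj : 0 ≤ wj)
    (hbi : 0 ≤ bi) (haij : ai ≤ aj) (hbij : bi ≤ bj) (hwji : wj ≤ wi) :
    wi ^ 2 * ai * (wj * bj) + wj ^ 2 * aj * (wi * bi) ≤
      wi ^ 2 * (wj * aj * bj) + wj ^ 2 * (wi * ai * bi) := by
  have h1 : wj * bi ≤ wi * bj := mul_le_mul hwji hbij hbi hwi
  have h2 : 0 ≤ wi * wj * (aj - ai) * (wi * bj - wj * bi) := by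
    apply mul_nonneg
    · exact mul_nonneg (mul_nonneg hwi hwj) (sub_nonneg.2 haij)
    · exact sub_nonneg.2 h1
  nlinarith [h2]

/-- Corollary 3: the square-root form of the fourth-order eigenvalue estimate
implies its quadratic form.  Eigenvalues are indexed `Γ 1, …, Γ (k+1)`. -/
theorem quadratic_form_from_sqrt_form_fourth_order
    (n : ℕ) (hn : 1 ≤ n) (ε δ c : ℝ) (hε : 0 < ε) (hεδ : ε ≤ δ) (hc : 0 ≤ c)
    (k : ℕ) (hk : 1 ≤ k) (Γ : ℕ → ℝ)
    (hΓpos : 0 < Γ 1)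
    (hmono : ∀ i, 1 ≤ i → i ≤ k → Γ i ≤ Γ (i + 1))
    (hsqrt : ∑ i ∈ Finset.Icc 1 k, (Γ (k + 1) - Γ i) ^ 2 ≤
        (1 / (n * ε)) *
          Real.sqrt (∑ i ∈ Finset.Icc 1 k,
            (Γ (k + 1) - Γ i) ^ 2 * ((2 * n + 4) * δ * Real.sqrt (Γ i) + c)) *
          Real.sqrt (∑ i ∈ Finset.Icc 1 k,
            (Γ (k + 1) - Γ i) * (4 * δ * Real.sqrt (Γ i) + c))) :
    ∑ i ∈ Finset.Icc 1 k, (Γ (k + 1) - Γ i) ^ 2 ≤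
      (1 / (n ^ 2 * ε ^ 2)) *
        ∑ i ∈ Finset.Icc 1 k,
          (Γ (k + 1) - Γ i) * ((2 * n + 4) * δ * Real.sqrt (Γ i) + c) *
            (4 * δ * Real.sqrt (Γ i) + c) := by
  have hδ : 0 < δ := lt_of_lt_of_le hε hεδ
  have hn' : (1 : ℝ) ≤ (n : ℝ) := by exact_mod_cast hn
  have hnε : 0 < (n : ℝ) * ε := mul_pos (by linarith) hε
  set I := Finset.Icc 1 k with hI
  set w : ℕ → ℝ := fun i => Γ (k + 1) - Γ i with hw
  set a : ℕ → ℝ := fun i => (2 * n + 4) * δ * Real.sqrt (Γ i) + c with ha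
  set b : ℕ → ℝ := fun i => 4 * δ * Real.sqrt (Γ i) + c with hb
  -- monotonicity of Γ
  have hmono' : ∀ m : ℕ, ∀ i : ℕ, 1 ≤ i → i + m ≤ k + 1 → Γ i ≤ Γ (i + m) := by
    intro m
    induction m with
    | zero => intro i _ _; simp
    | succ m ih =>
      intro i hi him
      have h1 : Γ i ≤ Γ (i + 1) := hmono i hi (by omega)
      have h2 : Γ (i + 1) ≤ Γ (i + 1 + m) := ih (i + 1) (by omega) (by omega)
      have h3 : i + 1 + m = i + (m + 1) := by omega
      rw [h3] at h2
      linarith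
  have hΓij : ∀ i j : ℕ, 1 ≤ i → i ≤ j → j ≤ k + 1 → Γ i ≤ Γ j := by
    intro i j hi hij hj
    have := hmono' (j - i) i hi (by omega)
    have h3 : i + (j - i) = j := by omega
    rwa [h3] at this
  have hΓpos' : ∀ i : ℕ, 1 ≤ i → i ≤ k + 1 → 0 < Γ i := by
    intro i hi hik
    exact lt_of_lt_of_le hΓpos (hΓij 1 i le_rfl hi hik)
  -- nonnegativity
  have hw0 : ∀ i ∈ I, 0 ≤ w i := by
    intro i hi
    simp only [hI, Finset.mem_Icc] at hi
    exact sub_nonneg.2 (hΓij i (k + 1) hi.1 (by omega) le_rfl)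
  have ha0 : ∀ i ∈ I, 0 ≤ a i := by
    intro i hi
    simp only [hI, Finset.mem_Icc] at hi
    have := Real.sqrt_nonneg (Γ i)
    have : (0 : ℝ) ≤ (2 * n + 4) * δ * Real.sqrt (Γ i) := by positivity
    simp only [ha]; linarith
  have hb0 : ∀ i ∈ I, 0 ≤ b i := by
    intro i hi
    have : (0 : ℝ) ≤ 4 * δ * Real.sqrt (Γ i) := by positivity
    simp only [hb]; linarith
  -- comparisons when Γ i ≤ Γ j
  have hcomp : ∀ i j : ℕ, Γ i ≤ Γ j → a i ≤ a j ∧ b i ≤ b j ∧ w j ≤ w i := by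
    intro i j hij
    have hs : Real.sqrt (Γ i) ≤ Real.sqrt (Γ j) := Real.sqrt_le_sqrt hij
    have hcoef : (0 : ℝ) ≤ (2 * n + 4) * δ := by positivity
    refine ⟨?_, ?_, ?_⟩
    · simp only [ha]
      have := mul_le_mul_of_nonneg_left hs hcoef
      linarith
    · simp only [hb]
      nlinarith
    · simp only [hw]
      linarith
  -- the sums
  set S := ∑ i ∈ I, w i ^ 2 with hSdef
  set A := ∑ i ∈ I, w i ^ 2 * a i with hAdef
  set B := ∑ i ∈ I, w i * b i with hBdef
  set C := ∑ i ∈ I, w i * a i * b i with hCdef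
  have hS0 : 0 ≤ S := Finset.sum_nonneg fun i _ => sq_nonneg _
  have hA0 : 0 ≤ A :=
    Finset.sum_nonneg fun i hi => mul_nonneg (sq_nonneg _) (ha0 i hi)
  have hB0 : 0 ≤ B :=
    Finset.sum_nonneg fun i hi => mul_nonneg (hw0 i hi) (hb0 i hi)
  have hC0 : 0 ≤ C :=
    Finset.sum_nonneg fun i hi =>
      mul_nonneg (mul_nonneg (hw0 i hi) (ha0 i hi)) (hb0 i hi)
  -- Chebyshev-type step : A * B ≤ S * C
  have hAB : A * B ≤ S * C := by
    rw [hAdef, hBdef, hSdef, hCdef, Finset.sum_mul_sum, Finset.sum_mul_sum]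
    set F : ℕ → ℕ → ℝ := fun i j => w i ^ 2 * a i * (w j * b j) with hF
    set G : ℕ → ℕ → ℝ := fun i j => w i ^ 2 * (w j * a j * b j) with hG
    have key : ∀ i ∈ I, ∀ j ∈ I, F i j + F j i ≤ G i j + G j i := by
      intro i hi j hj
      rcases le_total (Γ i) (Γ j) with hij | hij
      · obtain ⟨h1, h2, h3⟩ := hcomp i j hij
        exact pair_ineq (w i) (w j) (a i) (a j) (b i) (b j)
          (hw0 i hi) (hw0 j hj) (hb0 i hi) h1 h2 h3
      · obtain ⟨h1, h2, h3⟩ := hcomp j i hij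
        have := pair_ineq (w j) (w i) (a j) (a i) (b j) (b i)
          (hw0 j hj) (hw0 i hi) (hb0 j hj) h1 h2 h3
        simp only [hF, hG]
        linarith [this]
    have hdouble : ∀ H : ℕ → ℕ → ℝ,
        ∑ i ∈ I, ∑ j ∈ I, (H i j + H j i) = 2 * ∑ i ∈ I, ∑ j ∈ I, H i j := by
      intro H
      rw [show (∑ i ∈ I, ∑ j ∈ I, (H i j + H j i)) =
          (∑ i ∈ I, ∑ j ∈ I, H i j) + ∑ i ∈ I, ∑ j ∈ I, H j i by
            simp [Finset.sum_add_distrib]]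
      rw [Finset.sum_comm (f := fun j i => H j i)]
      ring
    have hsum : ∑ i ∈ I, ∑ j ∈ I, (F i j + F j i) ≤
        ∑ i ∈ I, ∑ j ∈ I, (G i j + G j i) :=
      Finset.sum_le_sum fun i hi =>
        Finset.sum_le_sum fun j hj => key i hi j hj
    rw [hdouble F, hdouble G] at hsum
    linarith
  -- square the hypothesis
  have hsqrtS : S ≤ 1 / ((n : ℝ) * ε) * Real.sqrt A * Real.sqrt B := hsqrt
  have hsq : S ^ 2 ≤ (1 / ((n : ℝ) * ε)) ^ 2 * (A * B) := by
    have hRHS : S ^ 2 ≤ (1 / ((n : ℝ) * ε) * Real.sqrt A * Real.sqrt B) ^ 2 := by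
      apply pow_le_pow_left₀ hS0 hsqrtS
    calc S ^ 2 ≤ (1 / ((n : ℝ) * ε) * Real.sqrt A * Real.sqrt B) ^ 2 := hRHS
      _ = (1 / ((n : ℝ) * ε)) ^ 2 * (Real.sqrt A ^ 2 * Real.sqrt B ^ 2) := by ring
      _ = (1 / ((n : ℝ) * ε)) ^ 2 * (A * B) := by
          rw [Real.sq_sqrt hA0, Real.sq_sqrt hB0]
  have hq : (1 / ((n : ℝ) * ε)) ^ 2 = 1 / ((n : ℝ) ^ 2 * ε ^ 2) := by
    rw [div_pow, mul_pow, one_pow]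
  have hgoal : S ≤ 1 / ((n : ℝ) ^ 2 * ε ^ 2) * C := by
    have hq0 : 0 < 1 / ((n : ℝ) ^ 2 * ε ^ 2) := by positivity
    rcases eq_or_lt_of_le hS0 with hS | hS
    · rw [← hS]
      positivity
    · have h1 : S ^ 2 ≤ (1 / ((n : ℝ) ^ 2 * ε ^ 2)) * (S * C) := by
        rw [← hq]
        calc S ^ 2 ≤ (1 / ((n : ℝ) * ε)) ^ 2 * (A * B) := hsq
          _ ≤ (1 / ((n : ℝ) * ε)) ^ 2 * (S * C) := by
              apply mul_le_mul_of_nonneg_left hAB (by positivity)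
      have h2 : S * S ≤ S * (1 / ((n : ℝ) ^ 2 * ε ^ 2) * C) := by nlinarith
      exact le_of_mul_le_mul_left h2 hS
  exact hgoal
end

section
/- Let n ≥ 1 be an integer, 0 < ε ≤ δ reals, c ≥ 0 a real, k ≥ 1, and let 0 < Γ₁ ≤ Γ₂ ≤ … ≤ Γ_{k+1} be reals satisfying Σ_{i=1}^k (Γ_{k+1} − Γᵢ)² ≤ (1/(n²ε²)) · Σ_{i=1}^k (Γ_{k+1} − Γᵢ) [ (2n+4)δ√Γᵢ + c ] [ 4δ√Γᵢ + c ]. Define A_k = (1/(2n²ε²k)) Σ_{i=1}^k [ (2n+4)δ√Γᵢ + c ][ 4δ√Γᵢ + c ] + (1/k)Σ_{i=1}^k Γᵢ and B_k = (1/(n²ε²k)) Σ_{i=1}^k Γᵢ [ (2n+4)δ√Γᵢ + c ][ 4δ√Γᵢ + c ] + (1/k)Σ_{i=1}^k Γᵢ². Then Γ_{k+1} ≤ A_k + √(A_k² − B_k). -/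
open scoped BigOperators

/-- Corollary 4 (first part): upper bound `Γ_{k+1} ≤ A_k + √(A_k² − B_k)` from the
quadratic fourth-order eigenvalue inequality.  Eigenvalues are indexed
`Γ 1, …, Γ (k+1)`. -/
theorem upper_bound_fourth_order_eigenvalue
    (n : ℕ) (hn : 1 ≤ n) (ε δ c : ℝ) (hε : 0 < ε) (hεδ : ε ≤ δ) (hc : 0 ≤ c)
    (k : ℕ) (hk : 1 ≤ k) (Γ : ℕ → ℝ)
    (hΓpos : 0 < Γ 1)
    (hmono : ∀ i, 1 ≤ i → i ≤ k → Γ i ≤ Γ (i + 1))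
    (hquad : ∑ i ∈ Finset.Icc 1 k, (Γ (k + 1) - Γ i) ^ 2 ≤
        (1 / (n ^ 2 * ε ^ 2)) *
          ∑ i ∈ Finset.Icc 1 k,
            (Γ (k + 1) - Γ i) * ((2 * n + 4) * δ * Real.sqrt (Γ i) + c) *
              (4 * δ * Real.sqrt (Γ i) + c))
    (A B : ℝ)
    (hA : A = (1 / (2 * n ^ 2 * ε ^ 2 * k)) *
        (∑ i ∈ Finset.Icc 1 k,
          ((2 * n + 4) * δ * Real.sqrt (Γ i) + c) * (4 * δ * Real.sqrt (Γ i) + c))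
        + (1 / (k : ℝ)) * ∑ i ∈ Finset.Icc 1 k, Γ i)
    (hB : B = (1 / (n ^ 2 * ε ^ 2 * k)) *
        (∑ i ∈ Finset.Icc 1 k,
          Γ i * ((2 * n + 4) * δ * Real.sqrt (Γ i) + c) * (4 * δ * Real.sqrt (Γ i) + c))
        + (1 / (k : ℝ)) * ∑ i ∈ Finset.Icc 1 k, (Γ i) ^ 2) :
    Γ (k + 1) ≤ A + Real.sqrt (A ^ 2 - B) := by
  set Λ := Γ (k + 1) with hΛ
  set p : ℕ → ℝ := fun i =>
    ((2 * n + 4) * δ * Real.sqrt (Γ i) + c) * (4 * δ * Real.sqrt (Γ i) + c) with hp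
  set s1 := ∑ i ∈ Finset.Icc 1 k, Γ i with hs1
  set s2 := ∑ i ∈ Finset.Icc 1 k, (Γ i) ^ 2 with hs2
  set sp := ∑ i ∈ Finset.Icc 1 k, p i with hsp
  set sgp := ∑ i ∈ Finset.Icc 1 k, Γ i * p i with hsgp
  have hnp : (0:ℝ) < (n:ℝ) := by exact_mod_cast hn
  have hkp : (0:ℝ) < (k:ℝ) := by exact_mod_cast hk
  have hD : (0:ℝ) < (n:ℝ) ^ 2 * ε ^ 2 := by positivity
  have hDk : (0:ℝ) < (n:ℝ) ^ 2 * ε ^ 2 * k := by positivity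
  -- expand the sums in hquad
  have e1 : ∑ i ∈ Finset.Icc 1 k, (Λ - Γ i) ^ 2 = k * Λ ^ 2 - 2 * Λ * s1 + s2 := by
    have : ∀ i ∈ Finset.Icc 1 k, (Λ - Γ i) ^ 2 = Λ ^ 2 - 2 * Λ * Γ i + (Γ i) ^ 2 :=
      fun i _ => by ring
    rw [Finset.sum_congr rfl this, Finset.sum_add_distrib, Finset.sum_sub_distrib,
      Finset.sum_const, Nat.card_Icc, ← Finset.mul_sum]
    simp [hs1, hs2]
  have e2 : ∑ i ∈ Finset.Icc 1 k,
      (Λ - Γ i) * ((2 * n + 4) * δ * Real.sqrt (Γ i) + c) * (4 * δ * Real.sqrt (Γ i) + c)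
      = Λ * sp - sgp := by
    have : ∀ i ∈ Finset.Icc 1 k,
        (Λ - Γ i) * ((2 * n + 4) * δ * Real.sqrt (Γ i) + c) * (4 * δ * Real.sqrt (Γ i) + c)
          = Λ * p i - Γ i * p i := fun i _ => by simp only [hp]; ring
    rw [Finset.sum_congr rfl this, Finset.sum_sub_distrib, ← Finset.mul_sum]
  rw [e1, e2] at hquad
  have h1 : ((n:ℝ) ^ 2 * ε ^ 2) * (k * Λ ^ 2 - 2 * Λ * s1 + s2) ≤ Λ * sp - sgp := by
    have h := mul_le_mul_of_nonneg_left hquad hD.le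
    calc ((n:ℝ) ^ 2 * ε ^ 2) * (k * Λ ^ 2 - 2 * Λ * s1 + s2)
        ≤ ((n:ℝ) ^ 2 * ε ^ 2) * (1 / ((n:ℝ) ^ 2 * ε ^ 2) * (Λ * sp - sgp)) := by
          convert h using 2 <;> push_cast <;> ring
      _ = Λ * sp - sgp := by field_simp
  have hA' : 2 * ((n:ℝ) ^ 2 * ε ^ 2) * k * A = sp + 2 * ((n:ℝ) ^ 2 * ε ^ 2) * s1 := by
    rw [hA]
    field_simp
  have eB : ∑ i ∈ Finset.Icc 1 k,
      Γ i * ((2 * n + 4) * δ * Real.sqrt (Γ i) + c) * (4 * δ * Real.sqrt (Γ i) + c) = sgp :=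
    Finset.sum_congr rfl fun i _ => by simp only [hp]; ring
  have hB' : ((n:ℝ) ^ 2 * ε ^ 2) * k * B = sgp + ((n:ℝ) ^ 2 * ε ^ 2) * s2 := by
    rw [hB, eB]
    field_simp
  have hq : Λ ^ 2 - 2 * A * Λ + B ≤ 0 := by
    have hmul : ((n:ℝ) ^ 2 * ε ^ 2 * k) * (Λ ^ 2 - 2 * A * Λ + B) =
        ((n:ℝ) ^ 2 * ε ^ 2) * (k * Λ ^ 2 - 2 * Λ * s1 + s2) - (Λ * sp - sgp) := by
      linear_combination (-Λ) * hA' + hB'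
    have hmul' : ((n:ℝ) ^ 2 * ε ^ 2 * k) * (Λ ^ 2 - 2 * A * Λ + B) ≤
        ((n:ℝ) ^ 2 * ε ^ 2 * k) * 0 := by rw [hmul, mul_zero]; linarith
    exact le_of_mul_le_mul_left hmul' hDk
  have hsq : (Λ - A) ^ 2 ≤ A ^ 2 - B := by
    have : (Λ - A) ^ 2 = (Λ ^ 2 - 2 * A * Λ + B) + (A ^ 2 - B) := by ring
    linarith [this, hq]
  have h2 : Λ - A ≤ Real.sqrt (A ^ 2 - B) := by
    calc Λ - A ≤ |Λ - A| := le_abs_self _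
      _ = Real.sqrt ((Λ - A) ^ 2) := (Real.sqrt_sq_eq_abs _).symm
      _ ≤ Real.sqrt (A ^ 2 - B) := Real.sqrt_le_sqrt hsq
  linarith
end

section
/- Let n ≥ 1 be an integer, 0 < ε ≤ δ reals, c ≥ 0 a real, k ≥ 1, and let 0 < Γ₁ ≤ Γ₂ ≤ … ≤ Γ_{k+1} be reals such that for every j with 1 ≤ j ≤ k one has Σ_{i=1}^j (Γ_{j+1} − Γᵢ)² ≤ (1/(n²ε²)) · Σ_{i=1}^j (Γ_{j+1} − Γᵢ) [ (2n+4)δ√Γᵢ + c ] [ 4δ√Γᵢ + c ]. Define A_k = (1/(2n²ε²k)) Σ_{i=1}^k [ (2n+4)δ√Γᵢ + c ][ 4δ√Γᵢ + c ] + (1/k)Σ_{i=1}^k Γᵢ and B_k = (1/(n²ε²k)) Σ_{i=1}^k Γᵢ [ (2n+4)δ√Γᵢ + c ][ 4δ√Γᵢ + c ] + (1/k)Σ_{i=1}^k Γᵢ². Then the gap between consecutive eigenvalues satisfies Γ_{k+1} − Γ_k ≤ 2√(A_k² − B_k). -/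
open scoped BigOperators

/-- Corollary 4 (second part): the gap `Γ_{k+1} − Γ_k ≤ 2√(A_k² − B_k)`, assuming
the quadratic fourth-order eigenvalue inequality for every `j ≤ k`.
Eigenvalues are indexed `Γ 1, …, Γ (k+1)`. -/
theorem gap_bound_fourth_order_eigenvalue
    (n : ℕ) (hn : 1 ≤ n) (ε δ c : ℝ) (hε : 0 < ε) (hεδ : ε ≤ δ) (hc : 0 ≤ c)
    (k : ℕ) (hk : 1 ≤ k) (Γ : ℕ → ℝ)
    (hΓpos : 0 < Γ 1)
    (hmono : ∀ i, 1 ≤ i → i ≤ k → Γ i ≤ Γ (i + 1))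
    (hquad : ∀ j : ℕ, 1 ≤ j → j ≤ k →
      ∑ i ∈ Finset.Icc 1 j, (Γ (j + 1) - Γ i) ^ 2 ≤
        (1 / (n ^ 2 * ε ^ 2)) *
          ∑ i ∈ Finset.Icc 1 j,
            (Γ (j + 1) - Γ i) * ((2 * n + 4) * δ * Real.sqrt (Γ i) + c) *
              (4 * δ * Real.sqrt (Γ i) + c))
    (A B : ℝ)
    (hA : A = (1 / (2 * n ^ 2 * ε ^ 2 * k)) *
        (∑ i ∈ Finset.Icc 1 k,
          ((2 * n + 4) * δ * Real.sqrt (Γ i) + c) * (4 * δ * Real.sqrt (Γ i) + c))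
        + (1 / (k : ℝ)) * ∑ i ∈ Finset.Icc 1 k, Γ i)
    (hB : B = (1 / (n ^ 2 * ε ^ 2 * k)) *
        (∑ i ∈ Finset.Icc 1 k,
          Γ i * ((2 * n + 4) * δ * Real.sqrt (Γ i) + c) * (4 * δ * Real.sqrt (Γ i) + c))
        + (1 / (k : ℝ)) * ∑ i ∈ Finset.Icc 1 k, (Γ i) ^ 2) :
    Γ (k + 1) - Γ k ≤ 2 * Real.sqrt (A ^ 2 - B) := by
  have hkR : (0:ℝ) < (k:ℝ) := by exact_mod_cast hk
  have hnR : (0:ℝ) < (n:ℝ) := by exact_mod_cast hn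
  set w : ℕ → ℝ := fun i =>
    ((2 * (n:ℝ) + 4) * δ * Real.sqrt (Γ i) + c) * (4 * δ * Real.sqrt (Γ i) + c) with hw
  -- key algebraic lemma
  have key : ∀ t : ℝ,
      (∑ i ∈ Finset.Icc 1 k, (t - Γ i) ^ 2 ≤
        (1 / ((n:ℝ) ^ 2 * ε ^ 2)) * ∑ i ∈ Finset.Icc 1 k, (t - Γ i) * w i) →
      (t - A) ^ 2 ≤ A ^ 2 - B := by
    intro t h
    have e1 : ∑ i ∈ Finset.Icc 1 k, (t - Γ i) ^ 2
        = (k:ℝ) * t ^ 2 - 2 * t * (∑ i ∈ Finset.Icc 1 k, Γ i)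
          + ∑ i ∈ Finset.Icc 1 k, (Γ i) ^ 2 := by
      have h0 : ∀ i ∈ Finset.Icc 1 k, (t - Γ i) ^ 2
          = t ^ 2 - (2 * t) * Γ i + (Γ i) ^ 2 := by intro i _; ring
      rw [Finset.sum_congr rfl h0, Finset.sum_add_distrib, Finset.sum_sub_distrib,
        ← Finset.mul_sum, Finset.sum_const, Nat.card_Icc]
      have : k + 1 - 1 = k := by omega
      rw [this]
      push_cast
      ring
    have e2 : ∑ i ∈ Finset.Icc 1 k, (t - Γ i) * w i
        = t * (∑ i ∈ Finset.Icc 1 k, w i) - ∑ i ∈ Finset.Icc 1 k, Γ i * w i := by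
      have h0 : ∀ i ∈ Finset.Icc 1 k, (t - Γ i) * w i = t * w i - Γ i * w i := by
        intro i _; ring
      rw [Finset.sum_congr rfl h0, Finset.sum_sub_distrib, ← Finset.mul_sum]
    rw [e1, e2] at h
    set S1 := ∑ i ∈ Finset.Icc 1 k, Γ i
    set S2 := ∑ i ∈ Finset.Icc 1 k, (Γ i) ^ 2
    set S3 := ∑ i ∈ Finset.Icc 1 k, w i
    set S4 := ∑ i ∈ Finset.Icc 1 k, Γ i * w i
    have hA' : A = 1 / (2 * (n:ℝ) ^ 2 * ε ^ 2 * k) * S3 + 1 / (k:ℝ) * S1 := hA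
    have hB' : B = 1 / ((n:ℝ) ^ 2 * ε ^ 2 * k) * S4 + 1 / (k:ℝ) * S2 := by
      rw [hB]
      congr 2
      refine Finset.sum_congr rfl fun i _ => ?_
      simp [hw, mul_assoc]
    have expand : (t - A) ^ 2 - (A ^ 2 - B)
        = (1 / (k:ℝ)) * (((k:ℝ) * t ^ 2 - 2 * t * S1 + S2)
            - (1 / ((n:ℝ) ^ 2 * ε ^ 2)) * (t * S3 - S4)) := by
      rw [hA', hB']
      field_simp
      ring
    have h5 : ((k:ℝ) * t ^ 2 - 2 * t * S1 + S2)
        - (1 / ((n:ℝ) ^ 2 * ε ^ 2)) * (t * S3 - S4) ≤ 0 := by linarith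
    have h6 : (1 / (k:ℝ)) * (((k:ℝ) * t ^ 2 - 2 * t * S1 + S2)
        - (1 / ((n:ℝ) ^ 2 * ε ^ 2)) * (t * S3 - S4)) ≤ 0 :=
      mul_nonpos_of_nonneg_of_nonpos (by positivity) h5
    linarith [expand ▸ h6]
  -- t = Γ (k+1)
  have h1 : (Γ (k + 1) - A) ^ 2 ≤ A ^ 2 - B := by
    apply key
    have h := hquad k hk le_rfl
    calc ∑ i ∈ Finset.Icc 1 k, (Γ (k + 1) - Γ i) ^ 2
        ≤ (1 / ((n:ℝ) ^ 2 * ε ^ 2)) * ∑ i ∈ Finset.Icc 1 k,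
            (Γ (k + 1) - Γ i) * ((2 * (n:ℝ) + 4) * δ * Real.sqrt (Γ i) + c) *
              (4 * δ * Real.sqrt (Γ i) + c) := h
      _ = (1 / ((n:ℝ) ^ 2 * ε ^ 2)) * ∑ i ∈ Finset.Icc 1 k, (Γ (k + 1) - Γ i) * w i := by
          congr 1
          refine Finset.sum_congr rfl fun i _ => ?_
          simp [hw, mul_assoc]
  -- t = Γ k
  have h2 : (Γ k - A) ^ 2 ≤ A ^ 2 - B := by
    apply key
    rcases eq_or_lt_of_le hk with hk1 | hk2
    · have hk1' : k = 1 := hk1.symm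
      subst hk1'
      simp
    · obtain ⟨m, rfl⟩ : ∃ m, k = m + 1 := ⟨k - 1, by omega⟩
      have hm : 1 ≤ m := by omega
      have h := hquad m hm (by omega)
      have h' : ∑ i ∈ Finset.Icc 1 m, (Γ (m + 1) - Γ i) ^ 2 ≤
          (1 / ((n:ℝ) ^ 2 * ε ^ 2)) * ∑ i ∈ Finset.Icc 1 m, (Γ (m + 1) - Γ i) * w i := by
        refine h.trans_eq ?_
        congr 1
        refine Finset.sum_congr rfl fun i _ => ?_
        simp [hw, mul_assoc]
      rw [Finset.sum_Icc_succ_top (by omega : 1 ≤ m + 1),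
        Finset.sum_Icc_succ_top (by omega : 1 ≤ m + 1)]
      simpa using h'
  have hD : 0 ≤ A ^ 2 - B := le_trans (sq_nonneg _) h1
  have s1 : |Γ (k + 1) - A| ≤ Real.sqrt (A ^ 2 - B) := by
    rw [← Real.sqrt_sq_eq_abs]; exact Real.sqrt_le_sqrt h1
  have s2 : |Γ k - A| ≤ Real.sqrt (A ^ 2 - B) := by
    rw [← Real.sqrt_sq_eq_abs]; exact Real.sqrt_le_sqrt h2
  have t1 := le_abs_self (Γ (k + 1) - A)
  have t2 := neg_abs_le (Γ k - A)
  linarith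
end

section
/- Let m ≥ 1 and let (aᵢ)_{i=1}^m, (bᵢ)_{i=1}^m, (cᵢ)_{i=1}^m be three sequences of nonnegative real numbers such that (aᵢ) is decreasing (a₁ ≥ a₂ ≥ … ≥ a_m) and (bᵢ) and (cᵢ) are increasing (b₁ ≤ … ≤ b_m and c₁ ≤ … ≤ c_m). Then ( Σ_{i=1}^m aᵢ² bᵢ ) · ( Σ_{i=1}^m aᵢ cᵢ ) ≤ ( Σ_{i=1}^m aᵢ² ) · ( Σ_{i=1}^m aᵢ bᵢ cᵢ ). -/
open scoped BigOperators

/-- Chebyshev-type rearrangement inequality of Jost, Li-Jost, Wang and Xia: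
for nonnegative sequences with `a` decreasing and `b`, `c` increasing,
`(∑ aᵢ² bᵢ)(∑ aᵢ cᵢ) ≤ (∑ aᵢ²)(∑ aᵢ bᵢ cᵢ)`. -/
theorem jost_chebyshev_type_inequality
    (m : ℕ) (hm : 1 ≤ m) (a b c : Fin m → ℝ)
    (ha0 : ∀ i, 0 ≤ a i) (hb0 : ∀ i, 0 ≤ b i) (hc0 : ∀ i, 0 ≤ c i)
    (ha : Antitone a) (hb : Monotone b) (hc : Monotone c) :
    (∑ i, (a i) ^ 2 * b i) * (∑ i, a i * c i) ≤
      (∑ i, (a i) ^ 2) * (∑ i, a i * b i * c i) := by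
  set F : Fin m → Fin m → ℝ :=
    fun i j => (a i) ^ 2 * (a j * b j * c j) - (a i) ^ 2 * b i * (a j * c j) with hF
  have key : ∀ i j : Fin m, 0 ≤ F i j + F j i := by
    intro i j
    have e : F i j + F j i
        = a i * a j * ((b j - b i) * (a i * c j - a j * c i)) := by
      simp only [hF]; ring
    rw [e]
    rcases le_total i j with h | h
    · have h1 : b i ≤ b j := hb h
      have h2 : a j ≤ a i := ha h
      have h3 : c i ≤ c j := hc h
      have h4 : a j * c i ≤ a i * c j :=
        mul_le_mul h2 h3 (hc0 i) (ha0 i)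
      have := mul_nonneg (mul_nonneg (ha0 i) (ha0 j))
        (mul_nonneg (sub_nonneg.2 h1) (sub_nonneg.2 h4))
      linarith
    · have h1 : b j ≤ b i := hb h
      have h2 : a i ≤ a j := ha h
      have h3 : c j ≤ c i := hc h
      have h4 : a i * c j ≤ a j * c i :=
        mul_le_mul h2 h3 (hc0 j) (ha0 j)
      have := mul_nonneg (mul_nonneg (ha0 i) (ha0 j))
        (mul_nonneg (sub_nonneg.2 h1) (sub_nonneg.2 h4))
      nlinarith [mul_nonneg (ha0 i) (ha0 j),
        mul_nonneg (sub_nonneg.2 h1) (sub_nonneg.2 h4)]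
  have hsum : 0 ≤ ∑ i, ∑ j, F i j := by
    have hcomm : ∑ i, ∑ j, F j i = ∑ i, ∑ j, F i j := Finset.sum_comm
    have h2 : (2:ℝ) * ∑ i, ∑ j, F i j = ∑ i, ∑ j, (F i j + F j i) := by
      simp only [Finset.sum_add_distrib]
      rw [hcomm]; ring
    have hnn : 0 ≤ ∑ i, ∑ j, (F i j + F j i) :=
      Finset.sum_nonneg fun i _ => Finset.sum_nonneg fun j _ => key i j
    linarith
  have expand : (∑ i, (a i) ^ 2) * (∑ i, a i * b i * c i)
      - (∑ i, (a i) ^ 2 * b i) * (∑ i, a i * c i) = ∑ i, ∑ j, F i j := by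
    rw [Finset.sum_mul_sum, Finset.sum_mul_sum, ← Finset.sum_sub_distrib]
    exact Finset.sum_congr rfl fun i _ => (Finset.sum_sub_distrib _ _).symm
  linarith
end

section
/- Let u : ℝⁿ → ℝⁿ be a smooth map vanishing on ∂Ω. Then ¼ ∫_Ω |u|² |tr(∇T) − T(∇η)|² dm + ∫_Ω ⟨u, T(tr(∇T), ∇u) − T(T(∇η), ∇u)⟩ dm = ¼ ∫_Ω |u|² |tr(∇T)|² dm + ∫_Ω |u|² ( ½ div( T(T(∇η)) − T(tr(∇T)) ) − ¼ |T(∇η)|² ) dm. -/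
open MeasureTheory Real
open scoped RealInnerProductSpace BigOperators

noncomputable section

abbrev En (n : ℕ) := EuclideanSpace ℝ (Fin n)

/-- Divergence of a vector field on Euclidean space: trace of the derivative. -/
def vdiv {n : ℕ} (X : En n → En n) (x : En n) : ℝ :=
  ∑ i, fderiv ℝ X x (EuclideanSpace.single i 1) i

/-- Weighted divergence `div_η X = div X − ⟨∇η, X⟩`. -/
def vdivEta {n : ℕ} (η : En n → ℝ) (X : En n → En n) (x : En n) : ℝ :=
  vdiv X x - ⟪gradient η x, X x⟫

/-- The operator `𝓛 f = div_η (T (∇ f))`. -/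
def Lop {n : ℕ} (T : En n → (En n →L[ℝ] En n)) (η : En n → ℝ) (f : En n → ℝ) (x : En n) : ℝ :=
  vdivEta η (fun y => T y (gradient f y)) x

/-- The vector field `tr(∇T)(x) = ∑ i (D_{e i} T)(x)(e i)`. -/
def trGradT {n : ℕ} (T : En n → (En n →L[ℝ] En n)) (x : En n) : En n :=
  ∑ i, fderiv ℝ T x (EuclideanSpace.single i 1) (EuclideanSpace.single i 1)

/-- Lebesgue measure on `Ω`, weighted with density `e^{-η}`. -/
def wMeasure {n : ℕ} (η : En n → ℝ) (Ω : Set (En n)) : Measure (En n) :=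
  (volume.restrict Ω).withDensity fun x => ENNReal.ofReal (Real.exp (-η x))

section Aux

open Set

lemma sum_coord {n : ℕ} (j : Fin n) (s : Finset (Fin n)) (f : Fin n → En n) :
    (∑ i ∈ s, f i) j = ∑ i ∈ s, f i j :=
  map_sum (EuclideanSpace.proj j) f s

lemma euclid_decomp {n : ℕ} (v : En n) : ∑ i, v i • EuclideanSpace.single i (1:ℝ) = v := by
  ext j
  rw [sum_coord]
  simp [EuclideanSpace.single_apply]

lemma clm_apply_eq_sum {n : ℕ} (ℓ : En n →L[ℝ] ℝ) (v : En n) :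
    ∑ i, v i * ℓ (EuclideanSpace.single i 1) = ℓ v := by
  conv_rhs => rw [← euclid_decomp v]
  rw [map_sum]
  simp [smul_eq_mul]

lemma inner_eq_sum {n : ℕ} (x y : En n) : ⟪x, y⟫ = ∑ i, x i * y i := by
  simp [PiLp.inner_apply, RCLike.inner_apply, conj_trivial]
  exact Finset.sum_congr rfl fun _ _ => mul_comm _ _

lemma fderiv_apply_eq_inner_grad {n : ℕ} (f : En n → ℝ) (x v : En n) :
    fderiv ℝ f x v = ⟪gradient f x, v⟫ := by
  rw [gradient]
  exact (InnerProductSpace.toDual_symm_apply).symm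

lemma abs_coord_le_norm {n : ℕ} (x : En n) (i : Fin n) : |x i| ≤ ‖x‖ := by
  rw [EuclideanSpace.norm_eq, ← Real.sqrt_sq (abs_nonneg (x i))]
  apply Real.sqrt_le_sqrt
  rw [sq_abs]
  exact Finset.single_le_sum (f := fun j => ‖x j‖^2) (fun j _ => sq_nonneg _) (Finset.mem_univ i)
    |>.trans_eq' (by rw [Real.norm_eq_abs, sq_abs])

lemma vdiv_continuous {n : ℕ} (W : En n → En n) (hW : ContDiff ℝ (⊤ : ℕ∞) W) :
    Continuous (vdiv W) := by
  apply continuous_finset_sum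
  intro i _
  have h0 : ContDiff ℝ (⊤ : ℕ∞) (fun x => fderiv ℝ W x) := hW.fderiv_right (by simp)
  have h1 : Continuous (fun x => fderiv ℝ W x) := h0.continuous
  have h2 : Continuous (fun x => fderiv ℝ W x (EuclideanSpace.single i 1)) :=
    isBoundedBilinearMap_apply.continuous.comp (h1.prodMk continuous_const)
  exact (EuclideanSpace.proj (𝕜 := ℝ) i).continuous.comp h2

lemma gradient_contDiff {n : ℕ} (f : En n → ℝ) (hf : ContDiff ℝ (⊤ : ℕ∞) f) :
    ContDiff ℝ (⊤ : ℕ∞) (fun x => gradient f x) :=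
  (InnerProductSpace.toDual ℝ (En n)).symm.contDiff.comp (hf.fderiv_right (by simp))

lemma cont_integrableOn {n : ℕ} (Ω : Set (En n)) (hΩbd : Bornology.IsBounded Ω)
    (f : En n → ℝ) (hf : Continuous f) : IntegrableOn f Ω :=
  (hf.continuousOn.integrableOn_compact hΩbd.isCompact_closure).mono_set subset_closure

lemma wMeasure_integral {n : ℕ} (η : En n → ℝ) (hη : Continuous η) (Ω : Set (En n))
    (f : En n → ℝ) :
    ∫ x, f x ∂(wMeasure η Ω) = ∫ x in Ω, Real.exp (-η x) * f x := by
  rw [wMeasure]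
  rw [show (fun x => ENNReal.ofReal (Real.exp (-η x)))
      = fun x => ((Real.toNNReal (Real.exp (-η x)) : NNReal) : ENNReal) from rfl]
  have hm : Measurable (fun x => Real.toNNReal (Real.exp (-η x))) :=
    (continuous_real_toNNReal.comp (Real.continuous_exp.comp hη.neg)).measurable
  rw [integral_withDensity_eq_integral_smul hm f]
  congr 1
  funext x
  rw [NNReal.smul_def, smul_eq_mul, Real.coe_toNNReal _ (Real.exp_nonneg _)]

/-- Divergence theorem on a bounded open set, for a `C^∞` field vanishing together with its
derivative on the frontier. -/
lemma integral_vdiv_eq_zero {m : ℕ} (Ω : Set (En (m+1))) (hΩopen : IsOpen Ω)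
    (hΩbd : Bornology.IsBounded Ω)
    (W : En (m+1) → En (m+1)) (hW : ContDiff ℝ (⊤ : ℕ∞) W)
    (hfr0 : ∀ x ∈ frontier Ω, W x = 0) (hfr1 : ∀ x ∈ frontier Ω, fderiv ℝ W x = 0) :
    ∫ x in Ω, vdiv W x = 0 := by
  classical
  set K := closure Ω with hK
  have hKc : IsCompact K := hΩbd.isCompact_closure
  set W' : En (m+1) → (En (m+1) →L[ℝ] En (m+1)) := K.indicator (fun x => fderiv ℝ W x) with hW'
  set Wt : En (m+1) → En (m+1) := K.indicator W with hWt
  -- derivative of the cut-off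
  have hder : ∀ x, HasFDerivAt Wt (W' x) x := by
    intro x
    rcases (em (x ∈ Ω)) with hx | hx
    · have hxK : x ∈ K := subset_closure hx
      have h1 : Wt =ᶠ[nhds x] W := by
        filter_upwards [hΩopen.mem_nhds hx] with y hy
        exact indicator_of_mem (subset_closure hy) W
      have h2 : HasFDerivAt W (fderiv ℝ W x) x :=
        (hW.differentiable (by simp) x).hasFDerivAt
      rw [hW', indicator_of_mem hxK]
      exact h2.congr_of_eventuallyEq h1
    rcases (em (x ∈ K)) with hxK | hxK
    · have hxf : x ∈ frontier Ω := by
        rw [hΩopen.frontier_eq]; exact ⟨hxK, hx⟩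
      have hWx : W x = 0 := hfr0 x hxf
      have hW'x : W' x = 0 := by rw [hW', indicator_of_mem hxK]; exact hfr1 x hxf
      rw [hW'x]
      have h2 : HasFDerivAt W (0 : En (m+1) →L[ℝ] En (m+1)) x := by
        have := (hW.differentiable (by simp) x).hasFDerivAt
        rwa [hfr1 x hxf] at this
      rw [hasFDerivAt_iff_isLittleO_nhds_zero] at h2 ⊢
      have hb : ∀ y : En (m+1), ‖Wt (x + y) - Wt x - (0 : En (m+1) →L[ℝ] En (m+1)) y‖
          ≤ ‖W (x + y) - W x - (0 : En (m+1) →L[ℝ] En (m+1)) y‖ := by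
        intro y
        have hWtx : Wt x = 0 := by rw [hWt, indicator_of_mem hxK, hWx]
        simp only [ContinuousLinearMap.zero_apply, sub_zero, hWtx, hWx]
        rw [hWt]
        exact (norm_indicator_le_norm_self W (x+y)).trans (le_refl _)
      exact (Asymptotics.isBigO_of_le _ hb).trans_isLittleO h2
    · have h1 : Wt =ᶠ[nhds x] (fun _ => (0 : En (m+1))) := by
        filter_upwards [hKc.isClosed.isOpen_compl.mem_nhds hxK] with y hy
        exact indicator_of_notMem hy W
      have hW'x : W' x = 0 := by rw [hW', indicator_of_notMem hxK]
      rw [hW'x]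
      exact (hasFDerivAt_const (0 : En (m+1)) x).congr_of_eventuallyEq h1
  -- the divergence of the cut-off is the indicator of the divergence
  have hDW : (fun x => ∑ i, W' x (EuclideanSpace.single i 1) i) = Ω.indicator (vdiv W) := by
    funext x
    rcases (em (x ∈ Ω)) with hx | hx
    · rw [indicator_of_mem hx, hW', indicator_of_mem (subset_closure hx : x ∈ K)]
      rfl
    rcases (em (x ∈ K)) with hxK | hxK
    · have hxf : x ∈ frontier Ω := by rw [hΩopen.frontier_eq]; exact ⟨hxK, hx⟩
      rw [indicator_of_notMem hx, hW', indicator_of_mem hxK, hfr1 x hxf]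
      simp
    · rw [indicator_of_notMem hx, hW', indicator_of_notMem hxK]
      simp
  -- choose a big box
  obtain ⟨C, hC⟩ : ∃ C, ∀ x ∈ K, ‖x‖ ≤ C := hKc.isBounded.exists_norm_le
  set R : ℝ := |C| + 1 with hR
  have hRK : ∀ x ∈ K, ∀ i, |x i| < R := by
    intro x hx i
    calc |x i| ≤ ‖x‖ := abs_coord_le_norm x i
    _ ≤ C := hC x hx
    _ ≤ |C| := le_abs_self C
    _ < R := by rw [hR]; linarith
  set L : En (m+1) ≃L[ℝ] (Fin (m+1) → ℝ) := EuclideanSpace.equiv (Fin (m+1)) ℝ with hL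
  set g : (Fin (m+1) → ℝ) → (Fin (m+1) → ℝ) := fun y => L (Wt (L.symm y)) with hg
  set g' : (Fin (m+1) → ℝ) → ((Fin (m+1) → ℝ) →L[ℝ] (Fin (m+1) → ℝ)) :=
    fun y => ((L : En (m+1) →L[ℝ] (Fin (m+1) → ℝ)).comp (W' (L.symm y))).comp
      (L.symm : (Fin (m+1) → ℝ) →L[ℝ] En (m+1)) with hg'
  have hgder : ∀ y, HasFDerivAt g (g' y) y := by
    intro y
    have h1 : HasFDerivAt (⇑L.symm) ((L.symm : (Fin (m+1) → ℝ) →L[ℝ] En (m+1))) y :=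
      L.symm.hasFDerivAt
    have h2 := (hder (L.symm y)).comp y h1
    have h3 := ((L : En (m+1) →L[ℝ] (Fin (m+1) → ℝ)).hasFDerivAt).comp y h2
    exact h3
  set a : Fin (m+1) → ℝ := fun _ => -R with ha
  set b : Fin (m+1) → ℝ := fun _ => R with hb
  have hRpos : (0:ℝ) < R := by rw [hR]; positivity
  have hab : a ≤ b := by
    intro i
    rw [ha, hb]
    simp only
    linarith
  -- identify the transported divergence
  have hgD : (fun y => ∑ i, g' y (Pi.single i 1) i)
      = fun y => Ω.indicator (vdiv W) (L.symm y) := by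
    funext y
    have : ∀ i : Fin (m+1), g' y (Pi.single i 1) i = W' (L.symm y) (EuclideanSpace.single i 1) i :=
      fun i => rfl
    simp only [this]
    exact congrFun hDW (L.symm y)
  have hvc : Continuous (vdiv W) := by
    apply continuous_finset_sum
    intro i _
    have h0 : ContDiff ℝ (⊤ : ℕ∞) (fun x => fderiv ℝ W x) := hW.fderiv_right (by simp)
    have h1 : Continuous (fun x => fderiv ℝ W x) := h0.continuous
    have h2 : Continuous (fun x => fderiv ℝ W x (EuclideanSpace.single i 1)) :=
      isBoundedBilinearMap_apply.continuous.comp (h1.prodMk continuous_const)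
    exact (EuclideanSpace.proj (𝕜 := ℝ) i).continuous.comp h2
  have hIndInt : Integrable (Ω.indicator (vdiv W)) volume := by
    rw [integrable_indicator_iff hΩopen.measurableSet]
    exact (hvc.continuousOn.integrableOn_compact hKc).mono_set subset_closure
  have hψ := EuclideanSpace.volume_preserving_symm_measurableEquiv_toLp (Fin (m+1))
  set ψ := (MeasurableEquiv.toLp 2 (Fin (m+1) → ℝ)).symm with hψdef
  have hcoe : ∀ y : Fin (m+1) → ℝ, (ψ.symm y : En (m+1)) = L.symm y := fun _ => rfl
  have hcoe2 : ∀ x : En (m+1), L.symm (ψ x) = x := fun _ => rfl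
  have hInt2 : Integrable (fun y => Ω.indicator (vdiv W) (L.symm y)) volume := by
    have := ((MeasurePreserving.symm ψ hψ).integrable_comp_emb ψ.symm.measurableEmbedding
      (g := Ω.indicator (vdiv W))).2 hIndInt
    exact this
  have hΩsub : Ω ⊆ ψ ⁻¹' (Icc a b) := by
    intro x hx
    simp only [mem_preimage, mem_Icc, Pi.le_def]
    constructor <;> intro i <;>
      have := hRK x (subset_closure hx) i
    · rw [abs_lt] at this; exact le_of_lt this.1
    · rw [abs_lt] at this; exact le_of_lt this.2
  have key := MeasureTheory.integral_divergence_of_hasFDerivAt_off_countable a b hab g g'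
    ∅ countable_empty
    (fun x _ => ((hgder x).differentiableAt).continuousAt.continuousWithinAt)
    (fun x hx => hgder x)
    (by rw [hgD]; exact hInt2.integrableOn)
  -- the boundary terms vanish
  have hface : ∀ (i : Fin (m+1)) (c : ℝ), |c| = R →
      ∀ x : Fin m → ℝ, g (Fin.insertNth i c x) i = 0 := by
    intro i c hcR x
    have hnot : (L.symm (Fin.insertNth i c x)) ∉ K := by
      intro hmem
      have h1 := hRK _ hmem i
      have h2' : (Fin.insertNth i c x : Fin (m+1) → ℝ) i = c := by simp
      have h2 : (L.symm (Fin.insertNth i c x)) i = c := h2'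
      rw [h2, hcR] at h1
      exact lt_irrefl _ h1
    rw [hg]
    show (Wt (L.symm (Fin.insertNth i c x))) i = 0
    rw [hWt, indicator_of_notMem hnot]
    rfl
  have hRHS : ∑ i : Fin (m+1),
      ((∫ x in Icc (a ∘ i.succAbove) (b ∘ i.succAbove), g (i.insertNth (b i) x) i) -
       ∫ x in Icc (a ∘ i.succAbove) (b ∘ i.succAbove), g (i.insertNth (a i) x) i) = 0 := by
    apply Finset.sum_eq_zero
    intro i _
    have h1 : ∀ x : Fin m → ℝ, g (i.insertNth (b i) x) i = 0 :=
      hface i (b i) (by rw [hb]; simp [abs_of_pos hRpos])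
    have h2 : ∀ x : Fin m → ℝ, g (i.insertNth (a i) x) i = 0 :=
      hface i (a i) (by rw [ha]; simp [abs_of_pos hRpos])
    simp [h1, h2]
  rw [hRHS] at key
  rw [hgD] at key
  -- transport the LHS back to `En`
  have hLHS : (∫ y in Icc a b, Ω.indicator (vdiv W) (L.symm y)) = ∫ x in Ω, vdiv W x := by
    rw [← hψ.setIntegral_preimage_emb ψ.measurableEmbedding
      (fun y => Ω.indicator (vdiv W) (L.symm y)) (Icc a b)]
    have : ∀ x : En (m+1), Ω.indicator (vdiv W) (L.symm (ψ x)) = Ω.indicator (vdiv W) x := by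
      intro x; rw [hcoe2]
    simp_rw [this]
    rw [setIntegral_indicator hΩopen.measurableSet,
      inter_eq_self_of_subset_right hΩsub]
  rw [hLHS] at key
  exact key


end Aux

/-- Key integral identity (Lemma 2 rewriting): for a smooth vector-valued map `u`
vanishing on `∂Ω`. -/
theorem integral_identity_trace_terms
    (n : ℕ) (hn : 1 ≤ n)
    (Ω : Set (En n)) (hΩopen : IsOpen Ω) (hΩbd : Bornology.IsBounded Ω)
    (hΩconn : IsConnected Ω)
    (η : En n → ℝ) (hη : ContDiff ℝ (⊤ : ℕ∞) η)
    (T : En n → (En n →L[ℝ] En n)) (hT : ContDiff ℝ (⊤ : ℕ∞) T)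
    (hTsym : ∀ x v w, ⟪T x v, w⟫ = ⟪v, T x w⟫)
    (hTpos : ∀ x v, v ≠ 0 → 0 < ⟪T x v, v⟫)
    (u : En n → En n) (hu : ContDiff ℝ (⊤ : ℕ∞) u)
    (hbd : ∀ x ∈ frontier Ω, u x = 0) :
    (1 / 4) * (∫ x, ‖u x‖ ^ 2 * ‖trGradT T x - T x (gradient η x)‖ ^ 2 ∂(wMeasure η Ω))
      + (∫ x, ∑ j, u x j *
          (⟪T x (trGradT T x), gradient (fun y => u y j) x⟫
            - ⟪T x (T x (gradient η x)), gradient (fun y => u y j) x⟫) ∂(wMeasure η Ω))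
    = (1 / 4) * (∫ x, ‖u x‖ ^ 2 * ‖trGradT T x‖ ^ 2 ∂(wMeasure η Ω))
      + (∫ x, ‖u x‖ ^ 2 *
          ((1 / 2) * vdiv (fun y => T y (T y (gradient η y)) - T y (trGradT T y)) x
            - (1 / 4) * ‖T x (gradient η x)‖ ^ 2) ∂(wMeasure η Ω)) := by
  classical
  obtain ⟨m, rfl⟩ : ∃ m, n = m + 1 := ⟨n - 1, (Nat.succ_pred_eq_of_pos hn).symm⟩
  set Z : En (m+1) → En (m+1) :=
    fun x => T x (trGradT T x) - T x (T x (gradient η x)) with hZdef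
  set φ : En (m+1) → ℝ := fun x => Real.exp (-η x) * ⟪u x, u x⟫ with hφdef
  set W : En (m+1) → En (m+1) := fun x => φ x • Z x with hWdef
  -- smoothness
  have hgradη : ContDiff ℝ (⊤ : ℕ∞) (fun x => gradient η x) := gradient_contDiff η hη
  have hAc : ContDiff ℝ (⊤ : ℕ∞) (trGradT T) := by
    rw [show trGradT T = fun x => ∑ i, fderiv ℝ T x (EuclideanSpace.single i 1)
      (EuclideanSpace.single i 1) from rfl]
    exact ContDiff.sum fun i _ =>
      ((hT.fderiv_right (by simp)).clm_apply contDiff_const).clm_apply contDiff_const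
  have hBc : ContDiff ℝ (⊤ : ℕ∞) (fun x => T x (gradient η x)) := hT.clm_apply hgradη
  have hTAc : ContDiff ℝ (⊤ : ℕ∞) (fun x => T x (trGradT T x)) := hT.clm_apply hAc
  have hTBc : ContDiff ℝ (⊤ : ℕ∞) (fun x => T x (T x (gradient η x))) := hT.clm_apply hBc
  have hZc : ContDiff ℝ (⊤ : ℕ∞) Z := hTAc.sub hTBc
  have hφc : ContDiff ℝ (⊤ : ℕ∞) φ := (Real.contDiff_exp.comp hη.neg).mul (hu.inner ℝ hu)
  have hWc : ContDiff ℝ (⊤ : ℕ∞) W := hφc.smul hZc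
  have hud : ∀ x, HasFDerivAt u (fderiv ℝ u x) x := fun x =>
    (hu.differentiable (by simp) x).hasFDerivAt
  -- derivative of W
  set Wd : En (m+1) → (En (m+1) →L[ℝ] En (m+1)) := fun x =>
    (Real.exp (-η x) * ⟪u x, u x⟫) • fderiv ℝ Z x +
      (Real.exp (-η x) • ((fderivInnerCLM ℝ (u x, u x)).comp
          ((fderiv ℝ u x).prod (fderiv ℝ u x)))
        + ⟪u x, u x⟫ • (Real.exp (-η x) • (-fderiv ℝ η x))).smulRight (Z x) with hWddef
  have hWd : ∀ x, HasFDerivAt W (Wd x) x := by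
    intro x
    have h1 : HasFDerivAt (fun y => -η y) (-fderiv ℝ η x) x :=
      ((hη.differentiable (by simp) x).hasFDerivAt).neg
    have h2 := h1.exp
    have h3 := (hud x).inner ℝ (hud x)
    have h4 := h2.mul h3
    exact h4.smul ((hZc.differentiable (by simp) x).hasFDerivAt)
  have hWfd : ∀ x, fderiv ℝ W x = Wd x := fun x => (hWd x).fderiv
  -- frontier conditions
  have hW0 : ∀ x ∈ frontier Ω, W x = 0 := by
    intro x hx
    rw [hWdef]
    simp only [hφdef, hbd x hx, inner_zero_left, mul_zero, zero_smul]
  have hWd0 : ∀ x ∈ frontier Ω, fderiv ℝ W x = 0 := by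
    intro x hx
    rw [hWfd, hWddef]
    ext v
    simp only [ContinuousLinearMap.add_apply, ContinuousLinearMap.smul_apply,
      ContinuousLinearMap.smulRight_apply, ContinuousLinearMap.comp_apply,
      ContinuousLinearMap.prod_apply, ContinuousLinearMap.neg_apply,
      ContinuousLinearMap.zero_apply, fderivInnerCLM_apply, hbd x hx,
      inner_zero_left, inner_zero_right, smul_eq_mul, mul_zero, zero_mul,
      add_zero, zero_add, zero_smul, smul_zero, add_smul]
  -- divergence of W pointwise
  have hvdivW : ∀ x, vdiv W x =
      Real.exp (-η x) * (⟪u x, u x⟫ * vdiv Z x + 2 * ⟪u x, fderiv ℝ u x (Z x)⟫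
        - ⟪u x, u x⟫ * ⟪gradient η x, Z x⟫) := by
    intro x
    have h0 : vdiv W x = ∑ i, Wd x (EuclideanSpace.single i 1) i := by
      simp only [vdiv, hWfd]
    rw [h0]
    have happ : ∀ i : Fin (m+1), Wd x (EuclideanSpace.single i 1) i
        = (Real.exp (-η x) * ⟪u x, u x⟫) * (fderiv ℝ Z x (EuclideanSpace.single i 1) i)
          + (Real.exp (-η x) * (⟪u x, fderiv ℝ u x (EuclideanSpace.single i 1)⟫
              + ⟪fderiv ℝ u x (EuclideanSpace.single i 1), u x⟫)
             + ⟪u x, u x⟫ * (Real.exp (-η x) * (-(fderiv ℝ η x (EuclideanSpace.single i 1)))))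
            * (Z x i) := by
      intro i
      rw [hWddef]
      simp only [ContinuousLinearMap.add_apply, ContinuousLinearMap.smul_apply,
        ContinuousLinearMap.smulRight_apply, ContinuousLinearMap.comp_apply,
        ContinuousLinearMap.prod_apply, ContinuousLinearMap.neg_apply,
        fderivInnerCLM_apply, PiLp.add_apply, PiLp.smul_apply, smul_eq_mul]
    rw [Finset.sum_congr rfl (fun i _ => happ i)]
    rw [Finset.sum_add_distrib, ← Finset.mul_sum]
    have hM : ∀ v : En (m+1), ⟪u x, fderiv ℝ u x v⟫
        = ((innerSL ℝ (u x)).comp (fderiv ℝ u x)) v := fun v => rfl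
    have hsum2 : ∑ i, (Real.exp (-η x) * (⟪u x, fderiv ℝ u x (EuclideanSpace.single i 1)⟫
              + ⟪fderiv ℝ u x (EuclideanSpace.single i 1), u x⟫)
             + ⟪u x, u x⟫ * (Real.exp (-η x) * (-(fderiv ℝ η x (EuclideanSpace.single i 1)))))
            * (Z x i)
        = Real.exp (-η x) * (2 * ⟪u x, fderiv ℝ u x (Z x)⟫)
          - Real.exp (-η x) * (⟪u x, u x⟫ * ⟪gradient η x, Z x⟫) := by
      have hcongr : ∀ i : Fin (m+1), (Real.exp (-η x) *
              (⟪u x, fderiv ℝ u x (EuclideanSpace.single i 1)⟫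
              + ⟪fderiv ℝ u x (EuclideanSpace.single i 1), u x⟫)
             + ⟪u x, u x⟫ * (Real.exp (-η x) * (-(fderiv ℝ η x (EuclideanSpace.single i 1)))))
            * (Z x i)
          = (2 * Real.exp (-η x)) * (Z x i *
              ((innerSL ℝ (u x)).comp (fderiv ℝ u x)) (EuclideanSpace.single i 1))
            - (Real.exp (-η x) * ⟪u x, u x⟫) *
              (Z x i * fderiv ℝ η x (EuclideanSpace.single i 1)) := by
        intro i
        rw [← hM, real_inner_comm (fderiv ℝ u x (EuclideanSpace.single i 1)) (u x)]
        ring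
      rw [Finset.sum_congr rfl (fun i _ => hcongr i), Finset.sum_sub_distrib,
        ← Finset.mul_sum, ← Finset.mul_sum]
      have e1 : ∑ i, Z x i * ((innerSL ℝ (u x)).comp (fderiv ℝ u x)) (EuclideanSpace.single i 1)
          = ⟪u x, fderiv ℝ u x (Z x)⟫ := by
        rw [clm_apply_eq_sum ((innerSL ℝ (u x)).comp (fderiv ℝ u x)) (Z x)]
        rfl
      have e2 : ∑ i, Z x i * fderiv ℝ η x (EuclideanSpace.single i 1)
          = ⟪gradient η x, Z x⟫ := by
        rw [clm_apply_eq_sum (fderiv ℝ η x) (Z x), fderiv_apply_eq_inner_grad]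
      rw [e1, e2]
      ring
    rw [hsum2]
    rw [show ∑ i, fderiv ℝ Z x (EuclideanSpace.single i 1) i = vdiv Z x from rfl]
    ring
  -- the second integrand equals ⟪u, Du (Z)⟫
  have hg2 : ∀ x, (∑ j, u x j *
      (⟪T x (trGradT T x), gradient (fun y => u y j) x⟫
        - ⟪T x (T x (gradient η x)), gradient (fun y => u y j) x⟫))
      = ⟪u x, fderiv ℝ u x (Z x)⟫ := by
    intro x
    have hj : ∀ j : Fin (m+1), fderiv ℝ (fun y => u y j) x
        = (EuclideanSpace.proj j).comp (fderiv ℝ u x) := by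
      intro j
      have h : HasFDerivAt (fun y => u y j) ((EuclideanSpace.proj (𝕜 := ℝ) j).comp
          (fderiv ℝ u x)) x := (EuclideanSpace.proj (𝕜 := ℝ) j).hasFDerivAt.comp x (hud x)
      exact h.fderiv
    have hterm : ∀ j : Fin (m+1),
        u x j * (⟪T x (trGradT T x), gradient (fun y => u y j) x⟫
          - ⟪T x (T x (gradient η x)), gradient (fun y => u y j) x⟫)
        = u x j * (fderiv ℝ u x (Z x) j) := by
      intro j
      have e1 : ⟪T x (trGradT T x), gradient (fun y => u y j) x⟫
          = fderiv ℝ u x (T x (trGradT T x)) j := by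
        rw [real_inner_comm, ← fderiv_apply_eq_inner_grad, hj j]
        rfl
      have e2 : ⟪T x (T x (gradient η x)), gradient (fun y => u y j) x⟫
          = fderiv ℝ u x (T x (T x (gradient η x))) j := by
        rw [real_inner_comm, ← fderiv_apply_eq_inner_grad, hj j]
        rfl
      rw [e1, e2]
      congr 1
      rw [show Z x = T x (trGradT T x) - T x (T x (gradient η x)) from rfl, map_sub]
      rfl
    rw [Finset.sum_congr rfl (fun j _ => hterm j), inner_eq_sum]
  -- the divergence of the RHS field is -vdiv Z
  have hvF : ∀ x, vdiv (fun y => T y (T y (gradient η y)) - T y (trGradT T y)) x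
      = - vdiv Z x := by
    intro x
    have hFZ : (fun y => T y (T y (gradient η y)) - T y (trGradT T y)) = fun y => -(Z y) := by
      funext y
      rw [show Z y = T y (trGradT T y) - T y (T y (gradient η y)) from rfl]
      exact (neg_sub _ _).symm
    rw [hFZ]
    have hneg : fderiv ℝ (fun y => -(Z y)) x = -fderiv ℝ Z x := fderiv_neg
    simp only [vdiv, hneg]
    have h5 : ∀ i : Fin (m+1), (-(fderiv ℝ Z x)) (EuclideanSpace.single i 1) i
        = -(fderiv ℝ Z x (EuclideanSpace.single i 1) i) := fun i => rfl
    rw [Finset.sum_congr rfl (fun i _ => h5 i), Finset.sum_neg_distrib]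
  -- symmetry of T
  have hsymZ : ∀ x, ⟪gradient η x, Z x⟫
      = ⟪T x (gradient η x), trGradT T x⟫ - ⟪T x (gradient η x), T x (gradient η x)⟫ := by
    intro x
    have h1 : Z x = T x (trGradT T x - T x (gradient η x)) := by
      rw [show Z x = T x (trGradT T x) - T x (T x (gradient η x)) from rfl, map_sub]
    rw [h1, ← hTsym x (gradient η x) (trGradT T x - T x (gradient η x)), inner_sub_right]
  -- pointwise identity
  have hpoint : ∀ x,
      (1/4 : ℝ) * (Real.exp (-η x) * (‖u x‖ ^ 2 * ‖trGradT T x - T x (gradient η x)‖ ^ 2))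
        + Real.exp (-η x) * (∑ j, u x j *
            (⟪T x (trGradT T x), gradient (fun y => u y j) x⟫
              - ⟪T x (T x (gradient η x)), gradient (fun y => u y j) x⟫))
      - ((1/4 : ℝ) * (Real.exp (-η x) * (‖u x‖ ^ 2 * ‖trGradT T x‖ ^ 2))
        + Real.exp (-η x) * (‖u x‖ ^ 2 *
            ((1 / 2) * vdiv (fun y => T y (T y (gradient η y)) - T y (trGradT T y)) x
              - (1 / 4) * ‖T x (gradient η x)‖ ^ 2)))
      = (1/2 : ℝ) * vdiv W x := by
    intro x
    rw [hg2 x, hvF x, hvdivW x, hsymZ x]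
    rw [← real_inner_self_eq_norm_sq (trGradT T x - T x (gradient η x)),
      ← real_inner_self_eq_norm_sq (trGradT T x),
      ← real_inner_self_eq_norm_sq (T x (gradient η x)),
      ← real_inner_self_eq_norm_sq (u x)]
    rw [inner_sub_sub_self, real_inner_comm (trGradT T x) (T x (gradient η x))]
    ring
  -- convert the weighted integrals to set integrals
  rw [wMeasure_integral η hη.continuous Ω, wMeasure_integral η hη.continuous Ω,
    wMeasure_integral η hη.continuous Ω, wMeasure_integral η hη.continuous Ω]
  -- integrability
  have hEc : Continuous (fun x => Real.exp (-η x)) := Real.continuous_exp.comp hη.continuous.neg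
  have hI1 : IntegrableOn (fun x => Real.exp (-η x) *
      (‖u x‖ ^ 2 * ‖trGradT T x - T x (gradient η x)‖ ^ 2)) Ω := by
    apply cont_integrableOn Ω hΩbd
    exact hEc.mul (((hu.continuous.norm.pow 2)).mul
      (((hAc.continuous.sub hBc.continuous).norm.pow 2)))
  have hI2 : IntegrableOn (fun x => Real.exp (-η x) * (∑ j, u x j *
      (⟪T x (trGradT T x), gradient (fun y => u y j) x⟫
        - ⟪T x (T x (gradient η x)), gradient (fun y => u y j) x⟫))) Ω := by
    apply cont_integrableOn Ω hΩbd
    apply hEc.mul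
    apply continuous_finset_sum
    intro j _
    have hcoordj : Continuous (fun x => u x j) := (EuclideanSpace.proj (𝕜 := ℝ) j).continuous.comp hu.continuous
    have hgradj : Continuous (fun x => gradient (fun y => u y j) x) :=
      (gradient_contDiff _ ((EuclideanSpace.proj (𝕜 := ℝ) j).contDiff.comp hu)).continuous
    exact hcoordj.mul ((hTAc.continuous.inner hgradj).sub (hTBc.continuous.inner hgradj))
  have hI3 : IntegrableOn (fun x => Real.exp (-η x) *
      (‖u x‖ ^ 2 * ‖trGradT T x‖ ^ 2)) Ω := by
    apply cont_integrableOn Ω hΩbd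
    exact hEc.mul ((hu.continuous.norm.pow 2).mul (hAc.continuous.norm.pow 2))
  have hI4 : IntegrableOn (fun x => Real.exp (-η x) * (‖u x‖ ^ 2 *
      ((1 / 2) * vdiv (fun y => T y (T y (gradient η y)) - T y (trGradT T y)) x
        - (1 / 4) * ‖T x (gradient η x)‖ ^ 2))) Ω := by
    apply cont_integrableOn Ω hΩbd
    apply hEc.mul
    apply (hu.continuous.norm.pow 2).mul
    have hFc : ContDiff ℝ (⊤ : ℕ∞) (fun y => T y (T y (gradient η y)) - T y (trGradT T y)) :=
      hTBc.sub hTAc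
    exact ((continuous_const.mul (vdiv_continuous _ hFc)).sub
      (continuous_const.mul (hBc.continuous.norm.pow 2)))
  -- the combined integral vanishes
  have h0 : ∫ x in Ω,
      ((1/4 : ℝ) * (Real.exp (-η x) * (‖u x‖ ^ 2 * ‖trGradT T x - T x (gradient η x)‖ ^ 2))
        + Real.exp (-η x) * (∑ j, u x j *
            (⟪T x (trGradT T x), gradient (fun y => u y j) x⟫
              - ⟪T x (T x (gradient η x)), gradient (fun y => u y j) x⟫))
      - ((1/4 : ℝ) * (Real.exp (-η x) * (‖u x‖ ^ 2 * ‖trGradT T x‖ ^ 2))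
        + Real.exp (-η x) * (‖u x‖ ^ 2 *
            ((1 / 2) * vdiv (fun y => T y (T y (gradient η y)) - T y (trGradT T y)) x
              - (1 / 4) * ‖T x (gradient η x)‖ ^ 2)))) = 0 := by
    rw [show (fun x =>
      (1/4 : ℝ) * (Real.exp (-η x) * (‖u x‖ ^ 2 * ‖trGradT T x - T x (gradient η x)‖ ^ 2))
        + Real.exp (-η x) * (∑ j, u x j *
            (⟪T x (trGradT T x), gradient (fun y => u y j) x⟫
              - ⟪T x (T x (gradient η x)), gradient (fun y => u y j) x⟫))
      - ((1/4 : ℝ) * (Real.exp (-η x) * (‖u x‖ ^ 2 * ‖trGradT T x‖ ^ 2))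
        + Real.exp (-η x) * (‖u x‖ ^ 2 *
            ((1 / 2) * vdiv (fun y => T y (T y (gradient η y)) - T y (trGradT T y)) x
              - (1 / 4) * ‖T x (gradient η x)‖ ^ 2)))) = fun x => (1/2 : ℝ) * vdiv W x from
      funext hpoint]
    rw [MeasureTheory.integral_const_mul]
    rw [integral_vdiv_eq_zero Ω hΩopen hΩbd W hWc hW0 hWd0]
    ring
  have hIL : IntegrableOn (fun x =>
      (1/4 : ℝ) * (Real.exp (-η x) * (‖u x‖ ^ 2 * ‖trGradT T x - T x (gradient η x)‖ ^ 2))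
        + Real.exp (-η x) * (∑ j, u x j *
            (⟪T x (trGradT T x), gradient (fun y => u y j) x⟫
              - ⟪T x (T x (gradient η x)), gradient (fun y => u y j) x⟫))) Ω := by
    exact (hI1.const_mul (1/4)).add hI2
  have hIR : IntegrableOn (fun x =>
      (1/4 : ℝ) * (Real.exp (-η x) * (‖u x‖ ^ 2 * ‖trGradT T x‖ ^ 2))
        + Real.exp (-η x) * (‖u x‖ ^ 2 *
            ((1 / 2) * vdiv (fun y => T y (T y (gradient η y)) - T y (trGradT T y)) x
              - (1 / 4) * ‖T x (gradient η x)‖ ^ 2))) Ω := by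
    exact (hI3.const_mul (1/4)).add hI4
  rw [integral_sub hIL hIR,
    integral_add (by exact hI1.const_mul (1/4)) hI2,
    integral_add (by exact hI3.const_mul (1/4)) hI4,
    MeasureTheory.integral_const_mul, MeasureTheory.integral_const_mul] at h0
  linarith

end
end
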